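/- arXiv:1001.5224 — 10 statements merged into one kernel-verified Lean document; each statement's English description precedes it below -/
import Mathlib

section
/- Let D be an integral domain and I a t-finite fractional ideal of D. Then I is flat as a D-module if and only if I is invertible. -/
/-!
If `I` is flat and `J = (a₁, …, aₙ) ⊆ I`, pick `0 ≠ a₀ ∈ I` and clear denominators:
`q aᵢ = pᵢ a₀` with `0 ≠ q ∈ D`. By the equational criterion these relations come from a free
module: `a₀ = ∑ₗ c₀ₗ yₗ` with `yₗ ∈ I` and `q cᵢₗ = pᵢ c₀ₗ`. Then `tₗ = c₀ₗ / a₀` satisfies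
`tₗ aᵢ = cᵢₗ ∈ D`, so `tₗ ∈ J⁻¹`, while `∑ₗ yₗ tₗ = 1`; hence `1 ∈ I J⁻¹`. If moreover
`J_t = I_t`, then `I ⊆ I_t = J_t ⊆ J_v`, so `J⁻¹ = (J_v)⁻¹ ⊆ I⁻¹` and `I I⁻¹ = D`.
Conversely, invertible ideals are projective, hence flat.
-/

open scoped nonZeroDivisors

section Defs
variable (D K : Type*) [CommRing D] [IsDomain D] [Field K] [Algebra D K] [IsFractionRing D K]

/-- The endomorphism ring `(N : N) = {x ∈ K | x N ⊆ N}` of a `D`-submodule of `K`,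
as a subalgebra of `K`. -/
def ends (N : Submodule D K) : Subalgebra D K where
  carrier := {x : K | ∀ y ∈ N, x * y ∈ N}
  mul_mem' := fun {a b} ha hb y hy => by
    rw [mul_assoc]; exact ha _ (hb _ hy)
  add_mem' := fun {a b} ha hb y hy => by
    rw [add_mul]; exact N.add_mem (ha _ hy) (hb _ hy)
  algebraMap_mem' := fun r y hy => by
    rw [← Algebra.smul_def]; exact N.smul_mem r hy

/-- `N` viewed as a module over its endomorphism ring `(N : N)`. -/
noncomputable def overEnds (N : Submodule D K) : Submodule (ends D K N) K :=
  Submodule.span (ends D K N) (N : Set K)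

/-- A `D`-submodule `N` of `K` is quasi-stable if it is flat as a module over its
endomorphism ring `(N : N)`. -/
def IsQuasiStable (N : Submodule D K) : Prop :=
  Module.Flat (ends D K N) (overEnds D K N)

/-- The `t`-closure of a fractional ideal: the union of the divisorial closures
`J_v = (D : (D : J))` of the finitely generated fractional subideals `J`. -/
noncomputable def tClosure (I : FractionalIdeal D⁰ K) : Submodule D K :=
  ⨆ J : {J : FractionalIdeal D⁰ K // J ≤ I ∧ (J : Submodule D K).FG},
    ((1 / (1 / (J : FractionalIdeal D⁰ K)) : FractionalIdeal D⁰ K) : Submodule D K)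

end Defs

open Module

theorem Module.Flat.exists_sum_smul_of_smul_eq_smul {R M : Type*} [CommRing R] [AddCommGroup M]
    [Module R M] [Flat R M] {ι : Type*} [Fintype ι] {x₀ : M} {x : ι → M} {q : R} {p : ι → R}
    (h : ∀ i, q • x i = p i • x₀) :
    ∃ (k : ℕ) (c₀ : Fin k → R) (c : ι → Fin k → R) (y : Fin k → M),
      x₀ = ∑ l, c₀ l • y l ∧ ∀ i l, q * c i l = p i * c₀ l := by
  let X : (Option ι →₀ R) →ₗ[R] M := Finsupp.linearCombination R fun i => Option.elim i x₀ x
  let rel : (ι →₀ R) →ₗ[R] (Option ι →₀ R) :=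
    Finsupp.linearCombination R fun i => Finsupp.single (some i) q - Finsupp.single none (p i)
  have hrel : X ∘ₗ rel = 0 := by
    ext i
    simp [X, rel, h]
  obtain ⟨k, A, y, hXyA, hA⟩ := Flat.exists_factorization_of_comp_eq_zero_of_free hrel
  refine ⟨k, A (Finsupp.single none 1), fun i => A (Finsupp.single (some i) 1),
    fun l => y (Finsupp.single l 1), ?_, fun i l => ?_⟩
  · simp_rw [← map_smul, Finsupp.smul_single_one, ← map_sum, Finsupp.univ_sum_single]
    simpa [X] using LinearMap.congr_fun hXyA (Finsupp.single none 1)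
  · have hi := LinearMap.congr_fun hA (Finsupp.single i 1)
    simp only [rel, LinearMap.comp_apply, Finsupp.linearCombination_single, one_smul, map_sub,
      LinearMap.zero_apply, sub_eq_zero] at hi
    rw [← Finsupp.smul_single_one, ← Finsupp.smul_single_one (none : Option ι), map_smul,
      map_smul] at hi
    simpa using congr($hi l)

theorem Submodule.mem_div_span_iff {R A : Type*} [CommSemiring R] [CommSemiring A] [Algebra R A]
    {P : Submodule R A} {s : Set A} {t : A} : t ∈ P / span R s ↔ ∀ a ∈ s, t * a ∈ P := by
  rw [← span_singleton_le_iff_mem, le_div_iff_mul_le, span_mul_span, span_le, Set.singleton_mul,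
    Set.image_subset_iff]
  rfl

theorem IsFractionRing.exists_smul_eq_smul_of_ne_zero (D : Type*) {K : Type*} [CommRing D] [Field K]
    [Algebra D K] [IsFractionRing D K] {ι : Type*} [Finite ι] (a : ι → K)
    {a₀ : K} (ha₀ : a₀ ≠ 0) : ∃ q ∈ D⁰, ∃ p : ι → D, ∀ i, q • a i = p i • a₀ := by
  obtain ⟨q, hq⟩ := IsLocalization.exist_integer_multiples_of_finite D⁰ (fun i => a i / a₀)
  choose p hp using hq
  refine ⟨q, q.2, p, fun i => ?_⟩
  rw [Algebra.smul_def (p i), hp, Algebra.smul_def, Algebra.smul_def, mul_assoc,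
    div_mul_cancel₀ _ ha₀]

section Flat

variable {D K : Type*} [CommRing D] [IsDomain D] [Field K] [Algebra D K] [IsFractionRing D K]

theorem one_mem_mul_one_div_span_of_flat {N : Submodule D K} [Flat D N] {a₀ : K}
    (ha₀N : a₀ ∈ N) (ha₀ : a₀ ≠ 0) {ι : Type*} [Fintype ι] {a : ι → K} (ha : ∀ i, a i ∈ N) :
    (1 : K) ∈ N * (1 / Submodule.span D (Set.range a)) := by
  obtain ⟨q, hq, p, hpq⟩ := IsFractionRing.exists_smul_eq_smul_of_ne_zero D a ha₀
  obtain ⟨k, c₀, c, y, hy, hc⟩ := Flat.exists_sum_smul_of_smul_eq_smul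
    (x₀ := (⟨a₀, ha₀N⟩ : N)) (x := fun i => ⟨a i, ha i⟩) (q := q) (p := p)
    fun i => Subtype.ext (hpq i)
  let t : Fin k → K := fun l => algebraMap D K (c₀ l) / a₀
  have ht : ∀ l, t l ∈ 1 / Submodule.span D (Set.range a) := by
    intro l
    rw [Submodule.mem_div_span_iff]
    rintro _ ⟨i, rfl⟩
    refine ⟨c i l, mul_left_cancel₀
      (IsFractionRing.to_map_ne_zero_of_mem_nonZeroDivisors hq) ?_⟩
    have hi := hpq i
    rw [Algebra.smul_def, Algebra.smul_def] at hi
    simp only [LinearMap.toSpanSingleton_apply, Algebra.smul_def, mul_one, t]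
    rw [← map_mul, hc, map_mul, div_mul_eq_mul_div, mul_div_assoc', eq_div_iff ha₀]
    linear_combination (-algebraMap D K (c₀ l)) * hi
  have hsum : ∑ l, (y l : K) * t l = 1 := by
    have h := congrArg Subtype.val hy
    simp only [Submodule.coe_sum, Submodule.coe_smul, Algebra.smul_def] at h
    simp only [t, mul_comm (y _ : K), div_mul_eq_mul_div, ← Finset.sum_div]
    exact (div_eq_one_iff_eq ha₀).2 h.symm
  rw [← hsum]
  exact Submodule.sum_mem _ fun l _ => Submodule.mul_mem_mul (y l).2 (ht l)

end Flat

namespace FractionalIdeal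

variable {D K : Type*} [CommRing D] [IsDomain D] [Field K] [Algebra D K] [IsFractionRing D K]

theorem one_mem_mul_inv_of_flat {I J : FractionalIdeal D⁰ K} [Flat D (I : Submodule D K)]
    (hJ : J ≠ 0) (hJI : J ≤ I) (hJfg : (J : Submodule D K).FG) : (1 : K) ∈ I * J⁻¹ := by
  obtain ⟨n, a, hJa⟩ := Submodule.fg_iff_exists_fin_generating_family.mp hJfg
  obtain ⟨a₀, ha₀J, ha₀⟩ :=
    Submodule.exists_mem_ne_zero_of_ne_bot (coeToSubmodule_eq_bot.not.mpr hJ)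
  rw [← mem_coe, coe_mul, coe_inv_of_ne_zero K hJ, IsLocalization.coeSubmodule_top, ← hJa]
  exact one_mem_mul_one_div_span_of_flat (hJI ha₀J) ha₀
    fun i => hJI (by rw [← mem_coe, ← hJa]; exact Submodule.subset_span (Set.mem_range_self i))

theorem inv_ne_zero {I : FractionalIdeal D⁰ K} (hI : I ≠ 0) : I⁻¹ ≠ 0 := by
  obtain ⟨d, hd, hdI⟩ := I.isFractional
  have hdinv : algebraMap D K d ∈ I⁻¹ := by
    rw [mem_inv_iff hI]
    intro y hy
    obtain ⟨c, hc⟩ := hdI y hy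
    exact (mem_one_iff _).mpr ⟨c, by rw [hc, Algebra.smul_def]⟩
  intro h
  rw [h, mem_zero_iff] at hdinv
  exact IsFractionRing.to_map_ne_zero_of_mem_nonZeroDivisors hd hdinv

theorem le_inv_inv (I : FractionalIdeal D⁰ K) : I ≤ I⁻¹⁻¹ := by
  rcases eq_or_ne I 0 with rfl | hI
  · exact zero_le _
  rw [inv_eq (I := I⁻¹), le_div_iff_mul_le (inv_ne_zero hI)]
  exact mul_one_div_le_one

theorem inv_inv_mono {I J : FractionalIdeal D⁰ K} (hIJ : I ≤ J) : I⁻¹⁻¹ ≤ J⁻¹⁻¹ := by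
  rcases eq_or_ne I 0 with rfl | hI
  · rw [inv_zero' (K := K), inv_zero' (K := K)]
    exact zero_le _
  have hJ : J ≠ 0 := by
    rintro rfl
    exact hI (le_zero_iff.mp hIJ)
  exact inv_anti_mono (inv_ne_zero hJ) (inv_ne_zero hI) (inv_anti_mono hI hJ hIJ)

theorem inv_le_inv_of_le_inv_inv {I J : FractionalIdeal D⁰ K} (hI : I ≠ 0) (hIJ : I ≤ J⁻¹⁻¹) :
    J⁻¹ ≤ I⁻¹ := by
  rw [inv_eq (I := I), le_div_iff_mul_le hI]
  calc J⁻¹ * I ≤ J⁻¹ * J⁻¹⁻¹ := mul_right_mono hIJ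
    _ ≤ 1 := mul_one_div_le_one

end FractionalIdeal

section tClosure

variable {D K : Type*} [CommRing D] [IsDomain D] [Field K] [Algebra D K] [IsFractionRing D K]

open FractionalIdeal

theorem le_tClosure (I : FractionalIdeal D⁰ K) : (I : Submodule D K) ≤ tClosure D K I := by
  intro x hx
  have hxI : spanSingleton D⁰ x ≤ I := spanSingleton_le_iff_mem.mpr hx
  have hfg : (spanSingleton D⁰ x : Submodule D K).FG := by
    rw [coe_spanSingleton]
    exact Submodule.fg_span_singleton x
  refine le_iSup (fun J : {J : FractionalIdeal D⁰ K // J ≤ I ∧ (J : Submodule D K).FG} =>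
    ((1 / (1 / (J : FractionalIdeal D⁰ K)) : FractionalIdeal D⁰ K) : Submodule D K))
    ⟨_, hxI, hfg⟩ ?_
  exact le_inv_inv _ (mem_spanSingleton_self D⁰ x)

theorem tClosure_le_inv_inv (J : FractionalIdeal D⁰ K) :
    tClosure D K J ≤ (J⁻¹⁻¹ : FractionalIdeal D⁰ K) :=
  iSup_le fun J' => coe_le_coe.mpr (inv_inv_mono J'.2.1)

end tClosure

/-- A `t`-finite fractional ideal of an integral domain is flat (as a `D`-module)
if and only if it is invertible. -/
theorem flat_iff_invertible_of_tFinite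
    (D K : Type*) [CommRing D] [IsDomain D] [Field K] [Algebra D K] [IsFractionRing D K]
    (I : FractionalIdeal D⁰ K) (hI : I ≠ 0)
    (htf : ∃ J : FractionalIdeal D⁰ K, J ≤ I ∧ (J : Submodule D K).FG ∧
      tClosure D K J = tClosure D K I) :
    Module.Flat D (I : Submodule D K) ↔ I * I⁻¹ = 1 := by
  obtain ⟨J, hJI, hJfg, htc⟩ := htf
  have hIJ : I ≤ J⁻¹⁻¹ :=
    FractionalIdeal.coe_le_coe.mp ((le_tClosure I).trans (htc ▸ tClosure_le_inv_inv J))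
  have hJ : J ≠ 0 := by
    rintro rfl
    rw [FractionalIdeal.inv_zero', FractionalIdeal.inv_zero', le_zero_iff] at hIJ
    exact hI hIJ
  constructor
  · intro hflat
    have hJinv : J⁻¹ ≤ I⁻¹ := FractionalIdeal.inv_le_inv_of_le_inv_inv hI hIJ
    refine le_antisymm FractionalIdeal.mul_one_div_le_one (FractionalIdeal.one_le.mpr ?_)
    exact mul_right_mono hJinv (FractionalIdeal.one_mem_mul_inv_of_flat hJ hJI hJfg)
  · intro hinv
    have hunit : IsUnit (I : Submodule D K) :=
      IsUnit.of_mul_eq_one (I⁻¹ : FractionalIdeal D⁰ K)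
        (by rw [← FractionalIdeal.coe_mul, hinv, FractionalIdeal.coe_one])
    have := Submodule.projective_of_isUnit hunit
    exact Module.Flat.of_projective
end

section
/- Let D be an integral domain, J a nonzero finitely generated fractional ideal of D, and I a flat fractional ideal of D. Then (I : J) = I·J⁻¹, where (I:J) = {x ∈ K | xJ ⊆ I} and J⁻¹ = (D:J). -/
open scoped nonZeroDivisors

/-!
Write `J = Da₁ + ⋯ + Daₙ` with all `aᵢ ≠ 0`. Then `(I : J) = ⋂ aᵢ⁻¹I` and `J⁻¹ = ⋂ aᵢ⁻¹D`, so it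
suffices that multiplication by the flat module `I` commutes with finite intersections. This
follows by tensoring `0 → A ∩ B → A → (A + B)/B` with `I`, since `I ⊗_D K → K` is injective:
every tensor in `I ⊗_D K` is a pure tensor `x ⊗ d⁻¹`.
-/

open TensorProduct

namespace Submodule

section CommAlgebra

variable {R A : Type*} [CommSemiring R] [CommSemiring A] [Algebra R A]

theorem div_sup (F I J : Submodule R A) : F / (I ⊔ J) = F / I ⊓ F / J :=
  eq_of_forall_le_iff fun P => by simp only [le_div_iff_mul_le, mul_sup, sup_le_iff, le_inf_iff]

theorem div_eq_mul_of_mul_eq_one (F : Submodule R A) {I J : Submodule R A} (h : J * I = 1) :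
    F / J = F * I := by
  refine le_antisymm ?_ (le_div_iff_mul_le.2 ?_)
  · calc F / J = F / J * (J * I) := by rw [h, mul_one]
      _ = F / J * J * I := (mul_assoc _ _ _).symm
      _ ≤ F * I := mul_le_mul_left (le_div_iff_mul_le.1 le_rfl) _
  · rw [mul_assoc, mul_comm I, h, mul_one]

end CommAlgebra

theorem mul_inf_eq_of_flat {R S : Type*} [CommRing R] [CommRing S] [Algebra R S]
    {F A B : Submodule R S} [Module.Flat R F] (H : F.LinearDisjoint (A ⊔ B)) :
    F * (A ⊓ B) = F * A ⊓ F * B := by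
  refine le_antisymm (le_inf (mul_le_mul_right inf_le_left _) (mul_le_mul_right inf_le_right _)) ?_
  rintro z ⟨hzA, hzB⟩
  rw [← mulMap_range] at hzA hzB ⊢
  obtain ⟨s, rfl⟩ := hzA
  obtain ⟨t, hts⟩ := hzB
  set iA := inclusion (le_sup_left : A ≤ A ⊔ B)
  set iB := inclusion (le_sup_right : B ≤ A ⊔ B)
  have hexact : Function.Exact (inclusion (inf_le_left : A ⊓ B ≤ A))
      ((LinearMap.range iB).mkQ ∘ₗ iA) := by
    intro a
    simp [iA, iB, Quotient.mk_eq_zero, Subtype.ext_iff, a.2]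
  have hst : iA.lTensor F s = iB.lTensor F t := H.injective <| by
    rw [← LinearMap.comp_apply, ← LinearMap.comp_apply, mulMap_comp_lTensor, mulMap_comp_lTensor,
      hts]
  obtain ⟨r, rfl⟩ := (Module.Flat.lTensor_exact F hexact s).1 <| by
    rw [LinearMap.lTensor_comp, LinearMap.comp_apply, hst, ← LinearMap.comp_apply,
      ← LinearMap.lTensor_comp, LinearMap.range_mkQ_comp, LinearMap.lTensor_zero,
      LinearMap.zero_apply]
  exact ⟨r, by rw [← LinearMap.comp_apply, mulMap_comp_lTensor]⟩

variable {D K : Type*} [CommRing D] [Field K] [Algebra D K] [IsFractionRing D K]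

theorem exists_eq_tmul_inv (F : Submodule D K) (t : F ⊗[D] (⊤ : Submodule D K)) :
    ∃ (x : F) (d : D⁰), t = x ⊗ₜ ⟨(algebraMap D K d)⁻¹, mem_top⟩ := by
  induction t with
  | zero => exact ⟨0, 1, by rw [zero_tmul]⟩
  | tmul x k =>
    obtain ⟨⟨c, d⟩, h : IsLocalization.mk' K c d = k⟩ := IsLocalization.mk'_surjective D⁰ k.1
    refine ⟨c • x, d, ?_⟩
    rw [smul_tmul]
    congr 1
    ext
    rw [← h, IsFractionRing.mk'_eq_div, div_eq_mul_inv, coe_smul, Algebra.smul_def]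
  | add a b ha hb =>
    obtain ⟨x, d, rfl⟩ := ha
    obtain ⟨y, e, rfl⟩ := hb
    have hd := (IsLocalization.map_units K d).ne_zero
    have he := (IsLocalization.map_units K e).ne_zero
    refine ⟨(e : D) • x + (d : D) • y, d * e, ?_⟩
    rw [add_tmul, smul_tmul, smul_tmul]
    congr 2 <;> ext <;> simp only [coe_smul, Algebra.smul_def, Submonoid.coe_mul, map_mul] <;>
      field_simp

theorem linearDisjoint_top_of_isFractionRing (F : Submodule D K) :
    F.LinearDisjoint (⊤ : Submodule D K) := by
  refine ⟨(injective_iff_map_eq_zero _).2 fun t ht => ?_⟩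
  obtain ⟨x, d, rfl⟩ := exists_eq_tmul_inv F t
  have hd := (IsLocalization.map_units K d).ne_zero
  rw [mulMap_tmul, mul_eq_zero, inv_eq_zero] at ht
  rw [show x = 0 from Subtype.ext (ht.resolve_right hd), zero_tmul]

theorem mul_inf_eq_of_flat_of_isFractionRing (F A B : Submodule D K) [Module.Flat D F] :
    F * (A ⊓ B) = F * A ⊓ F * B :=
  mul_inf_eq_of_flat ((linearDisjoint_top_of_isFractionRing F).of_le_right_of_flat le_top)

theorem div_eq_mul_one_div_of_flat (F J : Submodule D K) [Module.Flat D F] (hJ : J.FG)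
    (hJ0 : J ≠ ⊥) : F / J = F * (1 / J) := by
  induction J, hJ using fg_induction with
  | singleton a =>
    have ha : a ≠ 0 := by rintro rfl; exact hJ0 (span_singleton_eq_bot.2 rfl)
    have hunit : (D ∙ a) * (D ∙ a⁻¹) = 1 := by
      rw [span_mul_span, Set.singleton_mul_singleton, mul_inv_cancel₀ ha, one_eq_span]
    rw [div_eq_mul_of_mul_eq_one F hunit, div_eq_mul_of_mul_eq_one 1 hunit, one_mul]
  | sup J₁ J₂ _ _ ih₁ ih₂ =>
    rcases eq_or_ne J₁ ⊥ with rfl | h₁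
    · rw [bot_sup_eq] at hJ0 ⊢; exact ih₂ hJ0
    rcases eq_or_ne J₂ ⊥ with rfl | h₂
    · rw [sup_bot_eq] at hJ0 ⊢; exact ih₁ hJ0
    rw [div_sup, div_sup, ih₁ h₁, ih₂ h₂, mul_inf_eq_of_flat_of_isFractionRing]

end Submodule

/-- If `I` is a flat fractional ideal and `J` a nonzero finitely generated fractional
ideal of an integral domain `D`, then `(I : J) = I · J⁻¹`. -/
theorem div_eq_mul_inv_of_flat
    (D K : Type*) [CommRing D] [IsDomain D] [Field K] [Algebra D K] [IsFractionRing D K]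
    (I J : FractionalIdeal D⁰ K) (hJ : J ≠ 0) (hJfg : (J : Submodule D K).FG)
    (hflat : Module.Flat D (I : Submodule D K)) :
    I / J = I * (1 / J) := by
  rw [← FractionalIdeal.coeToSubmodule_inj, FractionalIdeal.coe_div hJ, FractionalIdeal.coe_mul,
    FractionalIdeal.coe_div hJ, FractionalIdeal.coe_one]
  exact Submodule.div_eq_mul_one_div_of_flat _ _ hJfg
    ((FractionalIdeal.coeToSubmodule_eq_bot).not.2 hJ)
end

section
/- Let D be an integral domain and I a flat nonzero fractional ideal of D. Then for every nonzero finitely generated fractional ideal J of D, (I : J) = (I : J_v), where J_v = (D:(D:J)). -/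
open scoped nonZeroDivisors

/-!
Write `J = (a₁, …, aₙ)` with `a₁ ≠ 0`, and let `x ∈ (I : J)`. The elements `x aᵢ ∈ I` satisfy the
`D`-linear relations `bⱼ (x a₁) = b₁ (x aⱼ)`, where `bᵢ = d aᵢ ∈ D` for a common denominator `d`.
By the equational criterion for flatness these relations are trivial: `x aᵢ = ∑ₗ cₗᵢ yₗ` with
`yₗ ∈ I` and each row `cₗ` proportional to `a`, i.e. `cₗᵢ = tₗ aᵢ` with `tₗ ∈ (D : J)`. Hence
`x = ∑ₗ tₗ yₗ ∈ I (D : J)`, and `I (D : J) J_v ⊆ I` because `(D : J) J_v ⊆ D`. So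
`(I : J) ⊆ I (D : J) ⊆ (I : J_v) ⊆ (I : J)`.
-/

open Module in
theorem Module.Flat.exists_factorization_of_relations {R M : Type*} [CommRing R] [AddCommGroup M]
    [Module R M] [Flat R M] {ι ρ : Type*} [Fintype ι] [Fintype ρ]
    (r : ρ → ι → R) (m : ι → M) (h : ∀ p, ∑ i, r p i • m i = 0) :
    ∃ (k : ℕ) (c : Fin k → ι → R) (y : Fin k → M),
      (∀ l p, ∑ i, r p i * c l i = 0) ∧ ∀ i, m i = ∑ l, c l i • y l := by
  classical
  have hcomp : Fintype.linearCombination R m ∘ₗ Fintype.linearCombination R r = 0 := by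
    ext p
    simpa [Fintype.linearCombination_apply, Pi.single_apply] using h p
  obtain ⟨k, a, y, hxa, ha⟩ := Flat.exists_factorization_of_comp_eq_zero_of_free hcomp
  refine ⟨k, fun l i => a (Pi.single i 1) l, fun l => y (Finsupp.single l 1), fun l p => ?_,
    fun i => ?_⟩
  · have := congr($ha (Pi.single p 1) l)
    simp only [LinearMap.comp_apply, Fintype.linearCombination_apply_single, one_smul] at this
    rw [pi_eq_sum_univ' (r p)] at this
    simpa using this
  · have := congr($hxa (Pi.single i 1))
    simp only [LinearMap.comp_apply, Fintype.linearCombination_apply_single, one_smul] at this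
    rw [this]
    conv_lhs => rw [← (a (Pi.single i 1)).univ_sum_single]
    simp only [map_sum, ← Finsupp.smul_single_one _ (a _ _), map_smul]

namespace Submodule

theorem mem_div_span_iff_s3 {R A : Type*} [CommSemiring R] [CommSemiring A] [Algebra R A]
    {I : Submodule R A} {s : Set A} {t : A} : t ∈ I / span R s ↔ ∀ a ∈ s, t * a ∈ I :=
  span_le (p := I.comap (LinearMap.mulLeft R t))

end Submodule

section

variable {D K : Type*} [CommRing D] [Field K] [Algebra D K] [IsFractionRing D K]

namespace Submodule

theorem div_span_le_mul_one_div_span_of_flat {I : Submodule D K} [Module.Flat D I] {n : ℕ}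
    (a : Fin n → K) {i₀ : Fin n} (ha₀ : a i₀ ≠ 0) :
    I / span D (Set.range a) ≤ I * (1 / span D (Set.range a)) := by
  classical
  obtain ⟨⟨d, hd⟩, hb⟩ := IsLocalization.exist_integer_multiples_of_finite D⁰ a
  choose b hb using hb
  have hdK : algebraMap D K d ≠ 0 := (IsLocalization.map_units K ⟨d, hd⟩).ne_zero
  intro x hx
  have hxa : ∀ i, x * a i ∈ I := fun i => hx _ (subset_span ⟨i, rfl⟩)
  obtain ⟨k, c, y, hc, hm⟩ := Module.Flat.exists_factorization_of_relations
    (fun j => (Pi.single i₀ (b j) - Pi.single j (b i₀) : Fin n → D))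
    (fun i => (⟨x * a i, hxa i⟩ : I)) (fun j => by
      simp only [Pi.sub_apply, sub_smul, Finset.sum_sub_distrib, Pi.single_apply, ite_smul,
        zero_smul, Finset.sum_ite_eq', Finset.mem_univ, if_true]
      ext
      simp only [SetLike.mk_smul_mk, Algebra.smul_def, hb, AddSubgroupClass.coe_sub,
        ZeroMemClass.coe_zero]
      ring)
  simp only [Pi.sub_apply, sub_mul, Finset.sum_sub_distrib, Pi.single_apply, ite_mul, zero_mul,
    Finset.sum_ite_eq', Finset.mem_univ, if_true, sub_eq_zero] at hc
  simp only [Subtype.ext_iff, AddSubmonoidClass.coe_finsetSum, SetLike.val_smul] at hm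
  set t : Fin k → K := fun l => algebraMap D K (c l i₀) / a i₀
  have hta : ∀ l j, t l * a j = algebraMap D K (c l j) := by
    intro l j
    have := congr(algebraMap D K $(hc l j))
    simp only [map_mul, hb, Algebra.smul_def] at this
    rw [div_mul_eq_mul_div, div_eq_iff ha₀]
    exact mul_left_cancel₀ hdK (by linear_combination this)
  have ht : ∀ l, t l ∈ 1 / span D (Set.range a) := by
    refine fun l => mem_div_span_iff_s3.mpr ?_
    rintro - ⟨j, rfl⟩
    exact mem_one.mpr ⟨c l j, (hta l j).symm⟩
  have hxt : x = ∑ l, (y l : K) * t l := calc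
    x = x * a i₀ / a i₀ := (mul_div_cancel_right₀ x ha₀).symm
    _ = ∑ l, (y l : K) * t l := by
      simp only [hm, Finset.sum_div, t, Algebra.smul_def, mul_div_assoc, mul_comm]
  rw [hxt]
  exact sum_mem fun l _ => mul_mem_mul (y l).2 (ht l)

theorem div_le_mul_one_div_of_flat {I J : Submodule D K} [Module.Flat D I]
    (hJfg : J.FG) (hJ : J ≠ ⊥) : I / J ≤ I * (1 / J) := by
  obtain ⟨n, a, rfl⟩ := fg_iff_exists_fin_generating_family.mp hJfg
  obtain ⟨i₀, ha₀⟩ : ∃ i₀, a i₀ ≠ 0 := by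
    by_contra! h
    exact hJ (by simpa [span_eq_bot] using h)
  exact div_span_le_mul_one_div_span_of_flat a ha₀

end Submodule

namespace FractionalIdeal

variable [IsDomain D]

theorem one_div_ne_zero {J : FractionalIdeal D⁰ K} (hJ : J ≠ 0) : 1 / J ≠ 0 := by
  obtain ⟨d, hd, hdJ⟩ := J.isFractional
  intro h
  have hmem : algebraMap D K d ∈ 1 / J :=
    (mem_div_iff_of_ne_zero hJ).mpr fun y hy => (mem_one_iff _).mpr (by
      obtain ⟨r, hr⟩ := hdJ y (mem_coe.mpr hy)
      exact ⟨r, by rw [hr, Algebra.smul_def]⟩)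
  rw [h, mem_zero_iff] at hmem
  exact (IsLocalization.map_units K ⟨d, hd⟩).ne_zero hmem

theorem le_one_div_one_div {J : FractionalIdeal D⁰ K} (hJ : J ≠ 0) : J ≤ 1 / (1 / J) :=
  (le_div_iff_mul_le (one_div_ne_zero hJ)).mpr mul_one_div_le_one

theorem div_le_div_left_of_le {I J J' : FractionalIdeal D⁰ K} (hJ : J ≠ 0) (h : J ≤ J') :
    I / J' ≤ I / J := by
  have hJ' : J' ≠ 0 := ne_bot_of_le_ne_bot hJ h
  exact (le_div_iff_of_ne_zero hJ).mpr fun x hx y hy => (mem_div_iff_of_ne_zero hJ').mp hx y (h hy)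

theorem mul_one_div_le_div_one_div_one_div (I : FractionalIdeal D⁰ K) {J : FractionalIdeal D⁰ K}
    (hJ : J ≠ 0) : I * (1 / J) ≤ I / (1 / (1 / J)) := by
  have hJv : 1 / (1 / J) ≠ 0 := one_div_ne_zero (one_div_ne_zero hJ)
  rw [le_div_iff_mul_le hJv, mul_assoc]
  exact mul_le_of_le_one_right' mul_one_div_le_one

theorem div_le_mul_one_div_of_flat {I J : FractionalIdeal D⁰ K} [Module.Flat D I]
    (hJfg : (J : Submodule D K).FG) (hJ : J ≠ 0) : I / J ≤ I * (1 / J) := by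
  rw [← coe_le_coe, coe_mul, coe_div hJ, coe_div hJ, coe_one]
  exact Submodule.div_le_mul_one_div_of_flat hJfg (coeToSubmodule_ne_bot.mpr hJ)

end FractionalIdeal

end

theorem div_eq_div_vClosure_of_flat_general
    (D K : Type*) [CommRing D] [IsDomain D] [Field K] [Algebra D K] [IsFractionRing D K]
    (I : FractionalIdeal D⁰ K)
    (hflat : Module.Flat D (I : Submodule D K))
    (J : FractionalIdeal D⁰ K) (hJ : J ≠ 0) (hJfg : (J : Submodule D K).FG) :
    I / J = I / (1 / (1 / J)) :=
  le_antisymm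
    (calc I / J ≤ I * (1 / J) := FractionalIdeal.div_le_mul_one_div_of_flat hJfg hJ
      _ ≤ I / (1 / (1 / J)) := FractionalIdeal.mul_one_div_le_div_one_div_one_div I hJ)
    (FractionalIdeal.div_le_div_left_of_le hJ (FractionalIdeal.le_one_div_one_div hJ))

/-- If `I` is a flat nonzero fractional ideal, then for every nonzero finitely generated
fractional ideal `J`, `(I : J) = (I : J_v)` where `J_v = (D : (D : J))`. -/
theorem div_eq_div_vClosure_of_flat
    (D K : Type*) [CommRing D] [IsDomain D] [Field K] [Algebra D K] [IsFractionRing D K]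
    (I : FractionalIdeal D⁰ K) (hI : I ≠ 0)
    (hflat : Module.Flat D (I : Submodule D K))
    (J : FractionalIdeal D⁰ K) (hJ : J ≠ 0) (hJfg : (J : Submodule D K).FG) :
    I / J = I / (1 / (1 / J)) :=
  div_eq_div_vClosure_of_flat_general D K I hflat J hJ hJfg
end

section
/- Let D be an integrally closed domain. Every idempotent (I² = I) flat nonzero fractional ideal of D is a radical ideal. -/
open scoped nonZeroDivisors

/-!
If `x ^ n ∈ I = I ^ n`, then already `x ^ n ∈ J ^ n` for a finitely generated `J ≤ I`.
Flatness of `I` gives `(A ⊓ B) * I = A * I ⊓ B * I`, and induction on the generators of `J`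
turns this into `c ≠ 0` and an ideal `L` with `c ∈ L * I` and `L * J ≤ (c)`; that is, the
fractional ideal `c⁻¹ L` contains `1` in its product with `I` and maps `J` into `D`.
For `g ∈ L` we get `(g x) ^ n ∈ L ^ n * J ^ n ≤ (c ^ n)`, so `c ∣ g x` because `D` is
integrally closed. Hence `c x ∈ x L I ≤ c I`, and cancelling `c` gives `x ∈ I`.
-/

open Ideal

namespace Module.Flat

variable {R M : Type*} [CommRing R] [AddCommGroup M] [Module R M] [Module.Flat R M]

theorem sum_smul_mem_inf_smul_top {ι : Type*} [Fintype ι] {A B : Ideal R} {a b : ι → R}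
    (ha : ∀ i, a i ∈ A) (hb : ∀ i, b i ∈ B) {x : ι → M}
    (hab : ∑ i, a i • x i = ∑ i, b i • x i) :
    ∑ i, a i • x i ∈ (A ⊓ B) • (⊤ : Submodule R M) := by
  have hrel : ∑ i, (a i - b i) • x i = 0 := by
    simp only [sub_smul, Finset.sum_sub_distrib, hab, sub_self]
  obtain ⟨k, α, y, hxy, hα⟩ := isTrivialRelation_of_sum_smul_eq_zero hrel
  have hB : ∀ j, ∑ i, a i * α i j = ∑ i, b i * α i j := fun j => by
    simpa only [sub_mul, Finset.sum_sub_distrib, sub_eq_zero] using hα j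
  have hsum : ∑ i, a i • x i = ∑ j, (∑ i, a i * α i j) • y j := by
    simp only [hxy, Finset.smul_sum, Finset.sum_smul, smul_smul]
    exact Finset.sum_comm
  rw [hsum]
  refine Submodule.sum_mem _ fun j _ => Submodule.smul_mem_smul ⟨?_, ?_⟩ Submodule.mem_top
  · exact Ideal.sum_mem _ fun i _ => A.mul_mem_right _ (ha i)
  · exact hB j ▸ Ideal.sum_mem _ fun i _ => B.mul_mem_right _ (hb i)

theorem inf_smul_top (A B : Ideal R) :
    (A ⊓ B) • (⊤ : Submodule R M) = A • ⊤ ⊓ B • ⊤ := by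
  classical
  refine le_antisymm (le_inf (Submodule.smul_mono_left inf_le_left)
    (Submodule.smul_mono_left inf_le_right)) ?_
  intro m hm
  obtain ⟨hA, hB⟩ := Submodule.mem_inf.mp hm
  rw [← Submodule.span_univ, ← Set.range_id, Submodule.mem_ideal_smul_span_iff_exists_sum]
    at hA hB
  obtain ⟨a, ha, rfl⟩ := hA
  obtain ⟨b, hb, hab⟩ := hB
  let s := a.support ∪ b.support
  have hsum : ∀ f : M →₀ R, f.support ⊆ s →
      (f.sum fun x c => c • id x) = ∑ x : s, f x • (x : M) := fun f hf => by
    rw [Finsupp.sum_of_support_subset f hf (fun x c => c • id x) (fun _ _ => zero_smul R _)]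
    exact (Finset.sum_coe_sort s _).symm
  rw [hsum a Finset.subset_union_left] at hab ⊢
  rw [hsum b Finset.subset_union_right] at hab
  exact sum_smul_mem_inf_smul_top (a := fun x : s => a x) (b := fun x : s => b x)
    (fun x => ha x) (fun x => hb x) hab.symm

end Module.Flat

namespace Ideal

variable {R : Type*}

theorem inf_mul_of_flat [CommRing R] {I : Ideal R} [Module.Flat R I] (A B : Ideal R) :
    (A ⊓ B) * I = A * I ⊓ B * I := by
  have hmap : ∀ L : Ideal R, L * I = (L • (⊤ : Submodule R I)).map I.subtype := fun L => by
    rw [Submodule.map_smul'', Submodule.map_subtype_top, smul_eq_mul]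
  rw [hmap, hmap, hmap, Module.Flat.inf_smul_top, Submodule.map_inf _ I.injective_subtype]

theorem exists_fg_le_and_mem_pow [CommSemiring R] {I : Ideal R} {y : R} {n : ℕ}
    (hy : y ∈ I ^ n) : ∃ J ≤ I, J.FG ∧ y ∈ J ^ n := by
  induction n generalizing y with
  | zero => exact ⟨⊥, bot_le, Submodule.fg_bot, by simp⟩
  | succ n ih =>
    rw [pow_succ] at hy
    induction hy using Submodule.mul_induction_on' with
    | mem_mul_mem a ha b hb =>
      obtain ⟨J, hJI, hJ, haJ⟩ := ih ha
      refine ⟨J ⊔ span {b}, sup_le hJI (span_singleton_le_iff_mem _ |>.mpr hb),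
        Submodule.FG.sup hJ (Submodule.fg_span_singleton b), ?_⟩
      rw [pow_succ]
      exact mul_mem_mul (pow_right_mono le_sup_left n haJ)
        (le_sup_right (α := Ideal R) (mem_span_singleton_self b))
    | add s _ t _ hs ht =>
      obtain ⟨J₁, hJ₁I, hJ₁, hsJ⟩ := hs
      obtain ⟨J₂, hJ₂I, hJ₂, htJ⟩ := ht
      exact ⟨J₁ ⊔ J₂, sup_le hJ₁I hJ₂I, Submodule.FG.sup hJ₁ hJ₂,
        add_mem (pow_right_mono le_sup_left _ hsJ) (pow_right_mono le_sup_right _ htJ)⟩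

variable [CommRing R] [IsDomain R]

theorem exists_mem_mul_and_mul_le_span_singleton_of_flat {I : Ideal R} [Module.Flat R I]
    (hI : I ≠ ⊥) {J : Ideal R} (hJ : J.FG) (hJI : J ≤ I) :
    ∃ c ≠ 0, ∃ L : Ideal R, c ∈ L * I ∧ L * J ≤ span {c} := by
  induction J, hJ using Submodule.fg_induction with
  | singleton x =>
    obtain ⟨c, hcI, hc, hxc⟩ : ∃ c ∈ I, c ≠ 0 ∧ x ∈ span {c} := by
      by_cases hx : x = 0
      · obtain ⟨c, hcI, hc⟩ := Submodule.exists_mem_ne_zero_of_ne_bot hI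
        exact ⟨c, hcI, hc, hx ▸ zero_mem _⟩
      · exact ⟨x, hJI (mem_span_singleton_self x), hx, mem_span_singleton_self x⟩
    refine ⟨c, hc, ⊤, by rwa [top_mul], ?_⟩
    rw [top_mul]
    exact span_singleton_le_iff_mem _ |>.mpr hxc
  | sup J₁ J₂ _ _ ih₁ ih₂ =>
    obtain ⟨c₁, hc₁, L₁, hcL₁, hLJ₁⟩ := ih₁ (le_sup_left.trans hJI)
    obtain ⟨c₂, hc₂, L₂, hcL₂, hLJ₂⟩ := ih₂ (le_sup_right.trans hJI)
    refine ⟨c₁ * c₂, mul_ne_zero hc₁ hc₂, span {c₂} * L₁ ⊓ span {c₁} * L₂, ?_, ?_⟩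
    · rw [inf_mul_of_flat, mul_assoc, mul_assoc]
      exact ⟨mul_comm c₁ c₂ ▸ mul_mem_mul (mem_span_singleton_self c₂) hcL₁,
        mul_mem_mul (mem_span_singleton_self c₁) hcL₂⟩
    · rw [mul_sup, sup_le_iff]
      constructor
      · calc (span {c₂} * L₁ ⊓ span {c₁} * L₂) * J₁ ≤ span {c₂} * (L₁ * J₁) := by
              rw [← mul_assoc]; exact mul_mono_left inf_le_left
          _ ≤ span {c₁ * c₂} := by
              rw [mul_comm c₁, ← span_singleton_mul_span_singleton]; exact mul_mono_right hLJ₁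
      · calc (span {c₂} * L₁ ⊓ span {c₁} * L₂) * J₂ ≤ span {c₁} * (L₂ * J₂) := by
              rw [← mul_assoc]; exact mul_mono_left inf_le_right
          _ ≤ span {c₁ * c₂} := by
              rw [← span_singleton_mul_span_singleton]; exact mul_mono_right hLJ₂

theorem mem_of_pow_mem_pow_of_mem_mul [IsIntegrallyClosed R] {I J L : Ideal R} {c : R}
    (hc : c ≠ 0) (hcL : c ∈ L * I) (hLJ : L * J ≤ span {c}) {x : R} {n : ℕ} (hn : n ≠ 0)
    (hx : x ^ n ∈ J ^ n) : x ∈ I := by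
  have hdvd : ∀ g ∈ L, c ∣ g * x := fun g hg => by
    rw [← IsIntegrallyClosed.pow_dvd_pow_iff hn, ← mem_span_singleton, ← span_singleton_pow]
    refine pow_right_mono hLJ n ?_
    rw [mul_pow, mul_pow]
    exact mul_mem_mul (pow_mem_pow hg n) hx
  have hcx : c * x ∈ span {c} * I := by
    refine Submodule.mul_induction_on (C := fun t => t * x ∈ span {c} * I) hcL ?_ ?_
    · intro g hg m hm
      rw [mul_right_comm]
      exact mul_mem_mul (mem_span_singleton.mpr (hdvd g hg)) hm
    · intro s t hs ht
      rw [add_mul]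
      exact add_mem hs ht
  obtain ⟨z, hz, hzx⟩ := mem_span_singleton_mul.mp hcx
  rwa [mul_left_cancel₀ hc hzx] at hz

end Ideal

/-- In an integrally closed domain, every idempotent flat nonzero ideal is a radical ideal. -/
theorem radical_of_idempotent_flat
    (D : Type*) [CommRing D] [IsDomain D] [IsIntegrallyClosed D]
    (I : Ideal D) (hI : I ≠ ⊥) (hflat : Module.Flat D I) (hidem : I * I = I) :
    I.radical = I := by
  refine le_antisymm (fun x ⟨n, hxn⟩ => ?_) le_radical
  rcases eq_or_ne n 0 with rfl | hn
  · rw [pow_zero, ← eq_top_iff_one] at hxn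
    exact hxn ▸ Submodule.mem_top
  rw [← IsIdempotentElem.pow_eq hidem hn] at hxn
  obtain ⟨J, hJI, hJ, hxJ⟩ := exists_fg_le_and_mem_pow hxn
  obtain ⟨c, hc, L, hcL, hLJ⟩ := exists_mem_mul_and_mul_le_span_singleton_of_flat hI hJ hJI
  exact mem_of_pow_mem_pow_of_mem_mul hc hcL hLJ hn hxJ
end

section
/- Let D be a TV-domain (a domain in which every t-ideal is divisorial). Then every faithfully flat nonzero ideal of D is invertible. -/
open scoped nonZeroDivisors

/-! A faithfully flat ideal `I` is locally principal: by the equational criterion for flatness,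
any element of `I` outside `m I` generates `I` at `m`. For locally principal `I`, every product
`I (D : B)` is a `t`-ideal, being locally a principal multiple of the divisorial ideal `(D : B)`.
In a TV-domain this makes `I = I_t = I_v` divisorial, which together with `(I : I) = D` gives
`(D : I I⁻¹) = D`; and as `I I⁻¹` is a `t`-ideal as well, `I I⁻¹ = (I I⁻¹)_v = D`. -/

namespace Submodule

variable {R M : Type*} [CommRing R] [AddCommGroup M] [Module R M]

/-- For `S = p.primeCompl` this is the preimage in `M` of the localization `P_p`. -/
def saturation (S : Submonoid R) (P : Submodule R M) : Submodule R M where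
  carrier := {w | ∃ s ∈ S, s • w ∈ P}
  add_mem' := by
    rintro w₁ w₂ ⟨s₁, hs₁, h₁⟩ ⟨s₂, hs₂, h₂⟩
    refine ⟨s₂ * s₁, S.mul_mem hs₂ hs₁, ?_⟩
    rw [smul_add, mul_smul, mul_comm, mul_smul]
    exact P.add_mem (P.smul_mem s₂ h₁) (P.smul_mem s₁ h₂)
  zero_mem' := ⟨1, S.one_mem, by simp⟩
  smul_mem' := by
    rintro c w ⟨s, hs, h⟩
    exact ⟨s, hs, by rw [smul_comm]; exact P.smul_mem c h⟩

theorem mem_of_forall_mem_saturation {P : Submodule R M} {z : M}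
    (h : ∀ (m : Ideal R) [m.IsMaximal], z ∈ P.saturation m.primeCompl) : z ∈ P := by
  by_contra hz
  obtain ⟨m, hm, hle⟩ := Ideal.exists_le_maximal (P.colon {z})
    (by rwa [Ne, colon_eq_top_iff_subset, Set.singleton_subset_iff])
  obtain ⟨s, hs, hsz⟩ := h m
  exact hs (hle (mem_colon_singleton.mpr hsz))

theorem exists_smul_mem_of_fg_le_saturation {S : Submonoid R} {P N : Submodule R M}
    (hN : N.FG) (h : N ≤ P.saturation S) : ∃ s ∈ S, ∀ w ∈ N, s • w ∈ P := by
  classical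
  obtain ⟨G, rfl⟩ := hN
  choose! t htS htP using fun g (hg : g ∈ G) => h (subset_span hg)
  have hprod : ∏ g ∈ G, t g ∈ P.colon (span R (G : Set M)) := by
    rw [colon_span, mem_colon]
    intro g hg
    obtain ⟨u, hu⟩ := Finset.dvd_prod_of_mem t hg
    rw [hu, mul_comm, mul_smul]
    exact P.smul_mem u (htP g hg)
  exact ⟨_, S.prod_mem htS, mem_colon.mp hprod⟩

theorem saturation_mul_le {A : Type*} [CommRing A] [Algebra R A] (S : Submonoid R)
    (P Q : Submodule R A) : P.saturation S * Q ≤ (P * Q).saturation S :=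
  mul_le.mpr fun _ ⟨s, hs, hp⟩ q hq => ⟨s, hs, by rw [← smul_mul_assoc]; exact mul_mem_mul hp hq⟩

end Submodule

namespace Ideal

variable {R : Type*} [CommRing R] {I : Ideal R}

/-- The equational criterion for flatness trivializes the relation `y • x - x • y = 0`, and
`x ∉ m * I` forces one of the resulting coefficients of `x` out of `m`. -/
theorem exists_mul_mem_span_singleton_of_flat [Module.Flat R I] {m : Ideal R} {x y : R}
    (hx : x ∈ I) (hxm : x ∉ m * I) (hy : y ∈ I) : ∃ s ∉ m, s * y ∈ span {x} := by
  have hrel : ∑ i, ![y, -x] i • ![(⟨x, hx⟩ : I), ⟨y, hy⟩] i = 0 := by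
    ext; simp [mul_comm]
  obtain ⟨k, a, z, hxz, ha⟩ := Module.Flat.isTrivialRelation_of_sum_smul_eq_zero hrel
  have hx_sum : x = ∑ j, a 0 j * z j := by
    simpa using congrArg Subtype.val (hxz 0)
  obtain ⟨j, hj⟩ : ∃ j, a 0 j ∉ m := by
    by_contra! h
    exact hxm (hx_sum ▸ Submodule.sum_mem _ fun j _ => mul_mem_mul (h j) (z j).2)
  refine ⟨a 0 j, hj, mem_span_singleton'.mpr ⟨a 1 j, ?_⟩⟩
  have := ha j
  simp only [Fin.sum_univ_two, Matrix.cons_val_zero, Matrix.cons_val_one] at this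
  linear_combination -this

theorem exists_notMem_mul_of_faithfullyFlat [Module.FaithfullyFlat R I] {m : Ideal R}
    (hm : m.IsMaximal) : ∃ x ∈ I, x ∉ m * I := by
  by_contra! h
  apply Module.FaithfullyFlat.submodule_ne_top (M := I) hm
  refine Submodule.map_injective_of_injective I.injective_subtype ?_
  rw [Submodule.map_smul'', Submodule.map_top, Submodule.range_subtype, smul_eq_mul]
  exact le_antisymm mul_le_right h

end Ideal

namespace FractionalIdeal

section

variable {D K : Type*} [CommRing D] [Field K] [Algebra D K]

/-- At every maximal ideal `m`, `I_m = ξ D_m` for some nonzero `ξ ∈ I`. -/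
def IsLocallyPrincipal (I : FractionalIdeal D⁰ K) : Prop :=
  ∀ (m : Ideal D) [m.IsMaximal], ∃ ξ ∈ I, ξ ≠ 0 ∧
    (I : Submodule D K) ≤ (Submodule.span D {ξ}).saturation m.primeCompl

theorem IsLocallyPrincipal.le_one_of_mul_le {I : FractionalIdeal D⁰ K}
    (hI : IsLocallyPrincipal I) {X : FractionalIdeal D⁰ K} (hX : X * I ≤ I) : X ≤ 1 := by
  intro u hu
  refine Submodule.mem_of_forall_mem_saturation fun m _ => ?_
  obtain ⟨ξ, hξ, hξ0, hIξ⟩ := hI m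
  obtain ⟨s, hs, hsu⟩ := hIξ (hX (mul_mem_mul hu hξ))
  obtain ⟨c, hc⟩ := Submodule.mem_span_singleton.mp hsu
  refine ⟨s, hs, (mem_one_iff _).mpr ⟨c, ?_⟩⟩
  apply mul_right_cancel₀ hξ0
  rw [← Algebra.smul_def, hc, smul_mul_assoc]

theorem isLocallyPrincipal_coeIdeal_of_faithfullyFlat [IsFractionRing D K] (I : Ideal D)
    [Module.FaithfullyFlat D I] : IsLocallyPrincipal (I : FractionalIdeal D⁰ K) := by
  intro m hm
  obtain ⟨x, hx, hxm⟩ := Ideal.exists_notMem_mul_of_faithfullyFlat (I := I) hm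
  have hx0 : x ≠ 0 := by rintro rfl; exact hxm (Submodule.zero_mem _)
  refine ⟨algebraMap D K x, mem_coeIdeal_of_mem _ hx,
    (map_ne_zero_iff _ (IsFractionRing.injective D K)).mpr hx0, ?_⟩
  rintro _ ⟨y, hy, rfl⟩
  obtain ⟨s, hs, hsy⟩ := Ideal.exists_mul_mem_span_singleton_of_flat hx hxm hy
  obtain ⟨c, hc⟩ := Ideal.mem_span_singleton'.mp hsy
  refine ⟨s, hs, Submodule.mem_span_singleton.mpr ⟨c, ?_⟩⟩
  simp only [Algebra.smul_def, Algebra.linearMap_apply, ← map_mul, hc]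

end

variable {D K : Type*} [CommRing D] [IsDomain D] [Field K] [Algebra D K] [IsFractionRing D K]

/-- `1 / B` is divisorial, so `y • J ⊆ 1 / B` passes to the divisorial closure
`J_v = 1 / (1 / J)`. -/
theorem mul_mem_one_div_of_mem_one_div_one_div {B J : FractionalIdeal D⁰ K} {y z : K}
    (hB : B ≠ 0) (hyJ : ∀ w ∈ J, y * w ∈ 1 / B) (hz : z ∈ 1 / (1 / J)) : y * z ∈ 1 / B := by
  rcases eq_or_ne (1 / J) 0 with hJ' | hJ'
  · rw [hJ', div_zero, mem_zero_iff] at hz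
    rw [hz, mul_zero]
    exact zero_mem _
  have hJ : J ≠ 0 := by rintro rfl; exact hJ' div_zero
  rw [mem_div_iff_of_ne_zero hB]
  intro b hb
  have hyb : y * b ∈ 1 / J := by
    rw [mem_div_iff_of_ne_zero hJ]
    intro w hw
    rw [mul_right_comm]
    exact (mem_div_iff_of_ne_zero hB).mp (hyJ w hw) b hb
  rw [mul_right_comm, mul_comm]
  exact (mem_div_iff_of_ne_zero hJ').mp hz _ hyb

/-- Locally, `I * (1 / B)` is the principal multiple `ξ * (1 / B)` of a divisorial ideal. -/
theorem IsLocallyPrincipal.tClosure_mul_one_div_le {I B : FractionalIdeal D⁰ K}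
    (hI : IsLocallyPrincipal I) (hB : B ≠ 0) :
    tClosure D K (I * (1 / B)) ≤ ((I * (1 / B) : FractionalIdeal D⁰ K) : Submodule D K) := by
  refine iSup_le fun ⟨J, hJ, hJfg⟩ z hz => Submodule.mem_of_forall_mem_saturation fun m _ => ?_
  obtain ⟨ξ, hξ, hξ0, hIξ⟩ := hI m
  have hJsat : (J : Submodule D K) ≤
      (Submodule.span D {ξ} * (1 / B : FractionalIdeal D⁰ K)).saturation m.primeCompl := by
    refine (coe_le_coe.mpr hJ).trans ?_
    rw [coe_mul]
    exact (mul_le_mul_left hIξ _).trans (Submodule.saturation_mul_le _ _ _)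
  obtain ⟨s, hs, hsJ⟩ := Submodule.exists_smul_mem_of_fg_le_saturation hJfg hJsat
  have hξs : ∀ w ∈ J, ξ⁻¹ * algebraMap D K s * w ∈ 1 / B := by
    intro w hw
    obtain ⟨b, hb, hbw⟩ := Submodule.mem_span_singleton_mul.mp (hsJ w hw)
    rwa [mul_assoc, ← Algebra.smul_def, ← hbw, inv_mul_cancel_left₀ hξ0]
  have hsz : algebraMap D K s * z = ξ * (ξ⁻¹ * algebraMap D K s * z) := by field_simp
  refine ⟨s, hs, ?_⟩
  rw [Algebra.smul_def, hsz]
  exact mul_mem_mul hξ (mul_mem_one_div_of_mem_one_div_one_div hB hξs hz)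

end FractionalIdeal

/-- In a TV-domain (every `t`-ideal is divisorial, i.e. `I_t = I_v` for all nonzero
fractional ideals), every faithfully flat nonzero ideal is invertible. -/
theorem invertible_of_faithfullyFlat_of_TV
    (D K : Type*) [CommRing D] [IsDomain D] [Field K] [Algebra D K] [IsFractionRing D K]
    (hTV : ∀ I : FractionalIdeal D⁰ K, I ≠ 0 →
      tClosure D K I = ((1 / (1 / I) : FractionalIdeal D⁰ K) : Submodule D K))
    (I : Ideal D) (hI : I ≠ ⊥) (hff : Module.FaithfullyFlat D I) :
    (I : FractionalIdeal D⁰ K) * (I : FractionalIdeal D⁰ K)⁻¹ = 1 := by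
  open FractionalIdeal in
  have hloc := isLocallyPrincipal_coeIdeal_of_faithfullyFlat (K := K) I
  have hI0 : (I : FractionalIdeal D⁰ K) ≠ 0 := coeIdeal_ne_zero.mpr hI
  have hT0 : (I : FractionalIdeal D⁰ K) * (1 / I) ≠ 0 := fun h =>
    hI0 (FractionalIdeal.le_zero_iff.mp (h ▸ coe_ideal_le_self_mul_inv K I))
  have hIinv0 : (1 / I : FractionalIdeal D⁰ K) ≠ 0 := right_ne_zero_of_mul hT0
  have hIv : (1 / (1 / I) : FractionalIdeal D⁰ K) ≤ I := by
    have := hloc.tClosure_mul_one_div_le one_ne_zero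
    rwa [FractionalIdeal.div_one, mul_one, hTV _ hI0, coe_le_coe] at this
  have hTdual : (1 / (I * (1 / I)) : FractionalIdeal D⁰ K) = 1 := by
    refine le_antisymm (hloc.le_one_of_mul_le ?_) ?_
    · refine le_trans ?_ hIv
      rw [le_div_iff_mul_le hIinv0, mul_assoc, mul_comm]
      exact mul_one_div_le_one
    · rw [le_div_iff_mul_le hT0, one_mul]
      exact mul_one_div_le_one
  have hTt := hloc.tClosure_mul_one_div_le hI0
  rw [hTV _ hT0, hTdual, FractionalIdeal.div_one, coe_le_coe] at hTt
  rw [inv_eq]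
  exact le_antisymm mul_one_div_le_one hTt
end

section
/- Let D be an integral domain and I a nonzero fractional ideal. Then I is flat as a D-module if and only if I(A ∩ B) = IA ∩ IB for all nonzero D-submodules A, B of the quotient field K. -/
/-!
Both conditions are read through the equational criterion for flatness, for an arbitrary
submodule `S` of `K`. If `S` is flat and `w = ∑ mᵢaᵢ = ∑ nⱼbⱼ ∈ SA ∩ SB`, the `K`-linear relation
`∑ aᵢmᵢ - ∑ bⱼnⱼ = 0` among elements of `S` becomes a `D`-linear one after clearing denominators,
hence is trivial: `mᵢ = ∑ cᵢₜyₜ`, `nⱼ = ∑ c'ⱼₜyₜ` with `∑ cᵢₜaᵢ = ∑ c'ⱼₜbⱼ ∈ A ∩ B`, and then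
`w = ∑ yₜ (∑ cᵢₜaᵢ) ∈ S(A ∩ B)`.

Conversely, given a relation `∑_{i ≤ n} fᵢxᵢ = 0` in `S` with `fₙ ≠ 0`, the element `fₙxₙ` lies in
`S·Dfₙ ∩ S·(f₀, …, fₙ₋₁)`, hence in `S(Dfₙ ∩ (f₀, …, fₙ₋₁))`. Thus `xₙ = ∑ dₜmₜ` with `dₜ` in the
colon ideal `((f₀, …, fₙ₋₁) : fₙ)`, say `fₙdₜ = ∑ gₜᵢfᵢ`, and the relation of length `n` among the
`xᵢ + ∑ gₜᵢmₜ` is trivial by induction; its trivialization extends to one of the original relation.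
-/

open scoped nonZeroDivisors

namespace Module

variable {R M : Type*} [CommRing R] [AddCommGroup M] [Module R M]

theorem IsTrivialRelation.of_fintype {ι κ : Type*} [Fintype ι] [Fintype κ] {f : ι → R}
    {x : ι → M} (a : ι → κ → R) (y : κ → M) (hay : ∀ i, x i = ∑ j, a i j • y j)
    (haf : ∀ j, ∑ i, f i * a i j = 0) : IsTrivialRelation f x :=
  isTrivialRelation_iff_vanishesTrivially.mpr <|
    .of_fintype a y hay fun j ↦ by simpa only [smul_eq_mul, mul_comm] using haf j

section CastSucc

variable {n k : ℕ} {f : Fin (n + 1) → R} {x : Fin (n + 1) → M} {d : Fin k → R} {m : Fin k → M}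
  {g : Fin k → Fin n → R}

theorem sum_smul_castSucc_add_eq (hx : x (Fin.last n) = ∑ t, d t • m t)
    (hfg : ∀ t, ∑ i, f i.castSucc * g t i = f (Fin.last n) * d t) :
    ∑ i, f i.castSucc • (x i.castSucc + ∑ t, g t i • m t) = ∑ i, f i • x i := by
  rw [Fin.sum_univ_castSucc, hx]
  simp only [smul_add, Finset.sum_add_distrib, Finset.smul_sum, smul_smul]
  congr 1
  rw [Finset.sum_comm]
  refine Finset.sum_congr rfl fun t _ ↦ ?_
  rw [← Finset.sum_smul, hfg t]

theorem IsTrivialRelation.of_castSucc (hx : x (Fin.last n) = ∑ t, d t • m t)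
    (hfg : ∀ t, ∑ i, f i.castSucc * g t i = f (Fin.last n) * d t)
    (h : IsTrivialRelation (fun i ↦ f i.castSucc) fun i ↦ x i.castSucc + ∑ t, g t i • m t) :
    IsTrivialRelation f x := by
  obtain ⟨p, a, y, hay, haf⟩ := h
  refine .of_fintype (κ := Fin p ⊕ Fin k)
    (Fin.lastCases (Sum.elim 0 d) fun i ↦ Sum.elim (a i) fun t ↦ -g t i) (Sum.elim y m)
    (Fin.lastCases ?last fun i ↦ ?castSucc) ?column
  case last => simp [Fintype.sum_sum_type, hx]
  case castSucc => simp [Fintype.sum_sum_type, ← hay i]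
  case column =>
    rintro (j | t)
    · simp [Fin.sum_univ_castSucc, haf j]
    · simp [Fin.sum_univ_castSucc, hfg t]

end CastSucc

end Module

namespace Submodule

theorem exists_fin_sum_of_mem_mul {R A : Type*} [CommSemiring R] [Semiring A] [Algebra R A]
    {S T : Submodule R A} {w : A} (hw : w ∈ S * T) :
    ∃ (k : ℕ) (m c : Fin k → A), (∀ t, m t ∈ S) ∧ (∀ t, c t ∈ T) ∧ w = ∑ t, m t * c t := by
  rw [mul_eq_span_mul_set, mem_span_set'] at hw
  obtain ⟨k, r, st, rfl⟩ := hw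
  choose m hm c hc hmc using fun t ↦ Set.mem_mul.mp (st t).2
  refine ⟨k, m, fun t ↦ r t • c t, hm, fun t ↦ T.smul_mem _ (hc t), ?_⟩
  simp only [← hmc, mul_smul_comm]

theorem mul_inf_eq_of_forall_ne_bot {R A : Type*} [CommSemiring R] [Semiring A] [Algebra R A]
    {S : Submodule R A}
    (H : ∀ B C : Submodule R A, B ≠ ⊥ → C ≠ ⊥ → S * (B ⊓ C) = S * B ⊓ S * C)
    (B C : Submodule R A) : S * (B ⊓ C) = S * B ⊓ S * C := by
  rcases eq_or_ne B ⊥ with rfl | hB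
  · simp
  rcases eq_or_ne C ⊥ with rfl | hC
  · simp
  exact H B C hB hC

section FractionField

variable {D K : Type*} [CommRing D] [Field K] [Algebra D K] [IsFractionRing D K]
  {S : Submodule D K}

theorem exists_factorization_of_sum_mul_eq_zero [Module.Flat D S] {ι : Type*} [Fintype ι]
    (u : ι → K) (z : ι → S) (h : ∑ i, u i * z i = 0) :
    ∃ (k : ℕ) (a : ι → Fin k → D) (y : Fin k → S),
      (∀ i, z i = ∑ j, a i j • y j) ∧ ∀ j, ∑ i, a i j • u i = 0 := by
  obtain ⟨s, hs⟩ := IsLocalization.exist_integer_multiples_of_finite D⁰ u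
  choose f hf using hs
  have hs0 : algebraMap D K s ≠ 0 := (IsLocalization.map_units K s).ne_zero
  have hfz : ∑ i, f i • z i = 0 := by
    ext
    simp only [coe_sum, coe_smul, Algebra.smul_def, hf, mul_assoc, ← Finset.mul_sum, h,
      mul_zero, ZeroMemClass.coe_zero]
  obtain ⟨k, a, y, hz, ha⟩ := Module.Flat.isTrivialRelation_of_sum_smul_eq_zero hfz
  refine ⟨k, a, y, hz, fun j ↦ ?_⟩
  have hsa : algebraMap D K s * ∑ i, a i j • u i = algebraMap D K (∑ i, f i * a i j) := by
    simp only [map_sum, map_mul, hf, Algebra.smul_def, Finset.mul_sum]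
    exact Finset.sum_congr rfl fun i _ ↦ by ring
  rw [ha j, map_zero] at hsa
  exact (mul_eq_zero.mp hsa).resolve_left hs0

theorem mul_inf_eq_of_flat_s10 [Module.Flat D S] (A B : Submodule D K) :
    S * (A ⊓ B) = S * A ⊓ S * B := by
  refine le_antisymm (le_inf (mul_le_mul' le_rfl inf_le_left) (mul_le_mul' le_rfl inf_le_right)) ?_
  rintro w ⟨hwA, hwB⟩
  obtain ⟨p, m, a, hm, ha, rfl⟩ := exists_fin_sum_of_mem_mul hwA
  obtain ⟨q, n, b, hn, hb, hw⟩ := exists_fin_sum_of_mem_mul hwB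
  obtain ⟨k, c, y, hmn, hc⟩ := exists_factorization_of_sum_mul_eq_zero
    (Sum.elim a fun j ↦ -b j) (Sum.elim (fun i ↦ ⟨m i, hm i⟩) fun j ↦ ⟨n j, hn j⟩)
    (by simp [Fintype.sum_sum_type, mul_comm, ← hw])
  have hcab : ∀ t, ∑ i, c (.inl i) t • a i = ∑ j, c (.inr j) t • b j := fun t ↦ by
    simpa [Fintype.sum_sum_type, add_neg_eq_zero] using hc t
  have hw' : ∑ i, m i * a i = ∑ t, (y t : K) * ∑ i, c (.inl i) t • a i := by
    simp only [Finset.mul_sum, mul_smul_comm]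
    rw [Finset.sum_comm]
    refine Finset.sum_congr rfl fun i _ ↦ ?_
    have hmi := congrArg Subtype.val (hmn (.inl i))
    simp only [Sum.elim_inl, coe_sum, coe_smul] at hmi
    rw [hmi, Finset.sum_mul]
    simp only [smul_mul_assoc]
  rw [hw']
  refine sum_mem fun t _ ↦ mul_mem_mul (y t).2 ⟨sum_mem fun i _ ↦ smul_mem _ _ (ha i), ?_⟩
  rw [hcab t]
  exact sum_mem fun j _ ↦ smul_mem _ _ (hb j)

theorem exists_colon_witnesses_of_mul_inf_eq
    (H : ∀ A B : Submodule D K, S * (A ⊓ B) = S * A ⊓ S * B) {n : ℕ} (f : Fin (n + 1) → D)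
    (x : Fin (n + 1) → S) (hfx : ∑ i, f i • x i = 0) :
    ∃ (k : ℕ) (d : Fin k → D) (m : Fin k → S) (g : Fin k → Fin n → D),
      x (Fin.last n) = ∑ t, d t • m t ∧ ∀ t, ∑ i, f i.castSucc * g t i = f (Fin.last n) * d t := by
  by_cases hf : f (Fin.last n) = 0
  · exact ⟨1, 1, fun _ ↦ x (Fin.last n), 0, by simp, by simp [hf]⟩
  set α := algebraMap D K (f (Fin.last n))
  have hα : α ≠ 0 := (map_ne_zero_iff _ (IsFractionRing.injective D K)).mpr hf
  let A := span D {α}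
  let B := span D (Set.range fun i : Fin n ↦ algebraMap D K (f i.castSucc))
  have hw : (x (Fin.last n) : K) * α ∈ S * (A ⊓ B) := by
    rw [H]
    refine ⟨mul_mem_mul (x _).2 (mem_span_singleton_self α), ?_⟩
    have hfxK := congrArg Subtype.val hfx
    rw [Fin.sum_univ_castSucc] at hfxK
    simp only [coe_add, coe_sum, coe_smul, Algebra.smul_def, ZeroMemClass.coe_zero] at hfxK
    rw [mul_comm (x _ : K), eq_neg_iff_add_eq_zero.mpr ((add_comm _ _).trans hfxK)]
    exact neg_mem (sum_mem fun i _ ↦ mul_mem_mul_rev (x _).2 (subset_span ⟨i, rfl⟩))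
  obtain ⟨k, m, c, hm, hc, hmc⟩ := exists_fin_sum_of_mem_mul hw
  choose d hd using fun t ↦ mem_span_singleton.mp (hc t).1
  choose g hg using fun t ↦ (mem_span_range_iff_exists_fun D).mp (hc t).2
  refine ⟨k, d, fun t ↦ ⟨m t, hm t⟩, g, ?_, fun t ↦ IsFractionRing.injective D K ?_⟩
  · ext
    apply mul_right_cancel₀ hα
    simp only [hmc, coe_sum, coe_smul, Finset.sum_mul, ← hd, Algebra.smul_def]
    exact Finset.sum_congr rfl fun t _ ↦ by ring
  · rw [map_mul, mul_comm, ← Algebra.smul_def, hd t, ← hg t, map_sum]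
    simp only [map_mul, Algebra.smul_def, mul_comm]

theorem flat_of_mul_inf_eq (H : ∀ A B : Submodule D K, S * (A ⊓ B) = S * A ⊓ S * B) :
    Module.Flat D S := by
  refine Module.Flat.of_forall_isTrivialRelation ?_
  intro l
  induction l with
  | zero => exact fun _ ↦ ⟨0, 0, 0, finZeroElim, finZeroElim⟩
  | succ n ih =>
    intro f x hfx
    obtain ⟨k, d, m, g, hx, hfg⟩ := exists_colon_witnesses_of_mul_inf_eq H f x hfx
    exact .of_castSucc hx hfg (ih ((Module.sum_smul_castSucc_add_eq hx hfg).trans hfx))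

end FractionField

end Submodule

theorem flat_iff_mul_inf_distrib_general
    (D K : Type*) [CommRing D] [Field K] [Algebra D K] [IsFractionRing D K]
    (I : FractionalIdeal D⁰ K) :
    Module.Flat D (I : Submodule D K) ↔
      ∀ A B : Submodule D K, A ≠ ⊥ → B ≠ ⊥ →
        (I : Submodule D K) * (A ⊓ B) =
          ((I : Submodule D K) * A) ⊓ ((I : Submodule D K) * B) :=
  ⟨fun _ A B _ _ ↦ Submodule.mul_inf_eq_of_flat_s10 A B,
    fun H ↦ Submodule.flat_of_mul_inf_eq (Submodule.mul_inf_eq_of_forall_ne_bot H)⟩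

/-- Flatness criterion: a nonzero fractional ideal `I` is flat over `D` if and only if
`I(A ∩ B) = IA ∩ IB` for all nonzero `D`-submodules `A, B` of the quotient field `K`. -/
theorem flat_iff_mul_inf_distrib
    (D K : Type*) [CommRing D] [IsDomain D] [Field K] [Algebra D K] [IsFractionRing D K]
    (I : FractionalIdeal D⁰ K) (hI : I ≠ 0) :
    Module.Flat D (I : Submodule D K) ↔
      ∀ A B : Submodule D K, A ≠ ⊥ → B ≠ ⊥ →
        (I : Submodule D K) * (A ⊓ B) =
          ((I : Submodule D K) * A) ⊓ ((I : Submodule D K) * B) :=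
  flat_iff_mul_inf_distrib_general D K I
end

section
/- Let D be an integral domain, I a nonzero fractional ideal of D that is flat as a D-module, and T an overring of D (D ⊆ T ⊆ K). Then IT is flat as a T-module. -/
open scoped nonZeroDivisors

/-!
Since `I` is flat over `D`, the map `T ⊗[D] I → K ⊗[D] I` is injective, and since `K` is a
flat epimorphic `D`-algebra, `K ⊗[D] I → IK` is an isomorphism. Hence the surjection
`T ⊗[D] I → IT`, `t ⊗ x ↦ t x`, is injective, so `IT ≅ T ⊗[D] I` is a base change of a flat
module.
-/

open TensorProduct Function

namespace Submodule

variable {R A M : Type*} [CommRing R] [CommRing A] [Algebra R A] [Algebra.IsEpi R A]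
  [Module.Flat R A] [AddCommGroup M] [Module R M] [Module A M] [IsScalarTower R A M]
  (T : Subalgebra R A) (p : Submodule R M) [Module.Flat R p]

lemma injective_tensorToSpan_subalgebra : Injective (p.tensorToSpan T) := by
  have hcomp : (span T (p : Set M)).subtype.restrictScalars R ∘ₗ
      (p.tensorToSpan T).restrictScalars R
      = (span A (p : Set M)).subtype.restrictScalars R ∘ₗ (p.tensorToSpan A).restrictScalars R
        ∘ₗ T.val.toLinearMap.rTensor p := by
    ext t x
    simp [Subalgebra.smul_def]
  have hinj : Injective ((span A (p : Set M)).subtype.restrictScalars R ∘ₗ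
      (p.tensorToSpan A).restrictScalars R ∘ₗ T.val.toLinearMap.rTensor p) :=
    (span A _).injective_subtype.comp <| (p.injective_tensorToSpan A).comp <|
      Module.Flat.rTensor_preserves_injective_linearMap _ Subtype.val_injective
  rw [← hcomp, LinearMap.coe_comp, LinearMap.coe_restrictScalars] at hinj
  exact hinj.of_comp

noncomputable def tensorEquivSpanSubalgebra : T ⊗[R] p ≃ₗ[T] span T (p : Set M) :=
  .ofBijective (p.tensorToSpan T)
    ⟨p.injective_tensorToSpan_subalgebra T, p.surjective_tensorToSpan T⟩

theorem flat_span_subalgebra : Module.Flat T (span T (p : Set M)) :=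
  .of_linearEquiv (p.tensorEquivSpanSubalgebra T).symm

end Submodule

set_option synthInstance.maxHeartbeats 1000000 in
theorem flat_extension_to_overring_general
    (D K : Type*) [CommRing D] [IsDomain D] [Field K] [Algebra D K] [IsFractionRing D K]
    (I : FractionalIdeal D⁰ K)
    (hflat : Module.Flat D (I : Submodule D K))
    (T : Subalgebra D K) :
    Module.Flat T (Submodule.span T ((I : Submodule D K) : Set K)) :=
  have : Module.Flat D K := IsLocalization.flat K D⁰
  Submodule.flat_span_subalgebra T (I : Submodule D K)

set_option synthInstance.maxHeartbeats 1000000 in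
/-- If `I` is a flat nonzero fractional ideal of `D` and `T` an overring of `D`
(inside the quotient field `K`), then `IT` is flat as a `T`-module. -/
theorem flat_extension_to_overring
    (D K : Type*) [CommRing D] [IsDomain D] [Field K] [Algebra D K] [IsFractionRing D K]
    (I : FractionalIdeal D⁰ K) (hI : I ≠ 0)
    (hflat : Module.Flat D (I : Submodule D K))
    (T : Subalgebra D K) :
    Module.Flat T (Submodule.span T ((I : Submodule D K) : Set K)) :=
  flat_extension_to_overring_general D K I hflat T
end

section
/- Let D be an integral domain and I a nonzero fractional ideal of D. If I is flat as a D-module, then I is quasi-stable, i.e., I is flat as a module over its endomorphism ring (I:I). -/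
open scoped nonZeroDivisors

/-! Clearing denominators: if `D ⊆ E ⊆ S⁻¹D`, a relation `∑ fᵢ xᵢ = 0` in an `E`-module with
`fᵢ ∈ E` becomes, after multiplying by a common denominator `b ∈ S`, a relation with coefficients
in `D`. Flatness over `D` makes it trivial, `xᵢ = ∑ⱼ aᵢⱼ yⱼ` with `∑ᵢ b fᵢ aᵢⱼ = 0` and `aᵢⱼ ∈ D ⊆ E`,
and `b` cancels because it is a unit in `S⁻¹D`. Applied to `E = (I : I) ⊆ K`, this shows that
`I`, which is the same module over `D` and over `(I : I)`, is flat over `(I : I)`. -/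

theorem Module.Flat.of_subalgebra_of_isLocalization {R A : Type*} [CommRing R] [CommRing A]
    [Algebra R A] (S : Submonoid R) [IsLocalization S A] (E : Subalgebra R A)
    (M : Type*) [AddCommGroup M] [Module R M] [Module E M] [IsScalarTower R E M]
    [Module.Flat R M] : Module.Flat E M := by
  refine Module.Flat.of_forall_isTrivialRelation fun {l f x} hfx => ?_
  obtain ⟨b, hb⟩ := IsLocalization.exist_integer_multiples_of_finite S (fun i => (f i : A))
  choose g hg using hb
  have hgf : ∀ i, algebraMap R E (g i) = (b : R) • f i := fun i => Subtype.ext (hg i)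
  have hrel : ∑ i, g i • x i = 0 := by
    simp_rw [← algebraMap_smul E (g _), hgf, smul_assoc, ← Finset.smul_sum, hfx, smul_zero]
  obtain ⟨k, a, y, hxa, hay⟩ := Module.Flat.isTrivialRelation_of_sum_smul_eq_zero hrel
  refine ⟨k, fun i j => algebraMap R E (a i j), y, fun i => ?_, fun j => ?_⟩
  · simp only [hxa i, algebraMap_smul]
  · have hb_unit : IsUnit (algebraMap R A b) := IsLocalization.map_units A b
    apply Subtype.ext
    rw [Subalgebra.coe_zero, ← hb_unit.mul_right_eq_zero, ← Algebra.smul_def]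
    calc (b : R) • ((∑ i, f i * algebraMap R E (a i j) : E) : A)
        = algebraMap R A (∑ i, g i * a i j) := by
          simp [Finset.smul_sum, ← hg, ← smul_mul_assoc]
      _ = 0 := by rw [hay j, map_zero]

theorem restrictScalars_overEnds (D K : Type*) [CommRing D] [Field K] [Algebra D K]
    (N : Submodule D K) : (overEnds D K N).restrictScalars D = N :=
  le_antisymm
    (Submodule.span_le (p := { N with smul_mem' := fun c _ hx => c.2 _ hx }) |>.mpr le_rfl)
    Submodule.subset_span

theorem quasiStable_of_flat_general
    (D K : Type*) [CommRing D] [Field K] [Algebra D K] [IsFractionRing D K]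
    (I : FractionalIdeal D⁰ K)
    (hflat : Module.Flat D (I : Submodule D K)) :
    IsQuasiStable D K (I : Submodule D K) := by
  have : Module.Flat D (overEnds D K I) :=
    .of_linearEquiv ((Submodule.restrictScalarsEquiv D _ _ _).symm.restrictScalars D ≪≫ₗ
      LinearEquiv.ofEq _ _ (restrictScalars_overEnds D K I))
  exact Module.Flat.of_subalgebra_of_isLocalization D⁰ _ _

/-- A flat nonzero fractional ideal is quasi-stable: it is flat over its endomorphism
ring `(I : I)`. -/
theorem quasiStable_of_flat
    (D K : Type*) [CommRing D] [IsDomain D] [Field K] [Algebra D K] [IsFractionRing D K]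
    (I : FractionalIdeal D⁰ K) (hI : I ≠ 0)
    (hflat : Module.Flat D (I : Submodule D K)) :
    IsQuasiStable D K (I : Submodule D K) :=
  quasiStable_of_flat_general D K I hflat
end

section
/- Let D be an integral domain, T an overring of D, and I a nonzero fractional ideal of D that is quasi-stable (flat over (I:I)). Then IT is a quasi-stable ideal of T, i.e., IT is flat as a module over (IT : IT). -/
open scoped nonZeroDivisors

/-! With `E = (N : N)` and `E' = (NT : NT)` we have `E ≤ E'` and `T ≤ E'`, so `NT = E'N` is the
image of `E' ⊗[E] N → K`. Since `K` is the fraction field of `E`, this map factors through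
`K ⊗[E] N`, the localization of `N ⊆ K`, which embeds in `K`; flatness of `N` makes
`E' ⊗[E] N → K ⊗[E] N` injective. Hence `NT ≅ E' ⊗[E] N` is flat over `E'` by base
change. -/

section BaseChange

variable {A B K : Type*} [CommRing A] [CommRing B] [CommRing K] [Algebra A B] [Algebra A K]
  [Algebra B K] [IsScalarTower A B K]

theorem Submodule.liftBaseChange_subtype_injective (S : Submonoid A) [IsLocalization S K]
    (M : Submodule A K) :
    Function.Injective (M.subtype.liftBaseChange K) :=
  IsLocalizedModule.injective_of_map_zero S (TensorProduct.mk A K M 1)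
    (g := (M.subtype.liftBaseChange K).restrictScalars A) fun m hm => by simp_all

theorem Submodule.liftBaseChange_subtype_injective_of_flat (S : Submonoid A) [IsLocalization S K]
    (hB : Function.Injective (algebraMap B K)) (M : Submodule A K) [Module.Flat A M] :
    Function.Injective (M.subtype.liftBaseChange B) := by
  let j : B →ₗ[A] K := (IsScalarTower.toAlgHom A B K).toLinearMap
  have hj : Function.Injective (j.rTensor M) :=
    Module.Flat.rTensor_preserves_injective_linearMap j hB
  have hfactor : ⇑(M.subtype.liftBaseChange B) = M.subtype.liftBaseChange K ∘ j.rTensor M :=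
    congrArg DFunLike.coe (show (M.subtype.liftBaseChange B).restrictScalars A =
        (M.subtype.liftBaseChange K).restrictScalars A ∘ₗ j.rTensor M by
      ext b m
      simp [j, Algebra.smul_def])
  exact hfactor ▸ (M.liftBaseChange_subtype_injective S).comp hj

theorem Module.Flat.span_of_isLocalization (S : Submonoid A) [IsLocalization S K]
    (hB : Function.Injective (algebraMap B K)) (M : Submodule A K) [Module.Flat A M] :
    Module.Flat B (Submodule.span B (M : Set K)) := by
  have hrange : LinearMap.range (M.subtype.liftBaseChange B) = Submodule.span B (M : Set K) := by
    rw [LinearMap.range_liftBaseChange, Submodule.range_subtype]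
  exact Module.Flat.of_linearEquiv
    ((LinearEquiv.ofInjective _ (M.liftBaseChange_subtype_injective_of_flat S hB)).trans
      (LinearEquiv.ofEq _ _ hrange)).symm

end BaseChange

section Ends

variable {D K : Type*} [CommRing D] [Field K] [Algebra D K]

theorem coe_overEnds (N : Submodule D K) : (overEnds D K N : Set K) = N := by
  refine subset_antisymm (fun x hx => ?_) Submodule.subset_span
  induction hx using Submodule.span_induction with
  | mem x hx => exact hx
  | zero => exact N.zero_mem
  | add x y _ _ hx hy => exact N.add_mem hx hy
  | smul e x _ hx => exact e.2 x hx

theorem le_mul_toSubmodule (N : Submodule D K) (T : Subalgebra D K) :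
    N ≤ N * Subalgebra.toSubmodule T := fun n hn => by
  simpa using Submodule.mul_mem_mul hn (Subalgebra.mem_toSubmodule T |>.mpr T.one_mem)

theorem mem_ends_mul_toSubmodule {N : Submodule D K} {T : Subalgebra D K} {x : K}
    (hx : ∀ n ∈ N, x * n ∈ N * Subalgebra.toSubmodule T) :
    x ∈ ends D K (N * Subalgebra.toSubmodule T) := by
  intro y hy
  induction hy using Submodule.mul_induction_on' with
  | mem_mul_mem n hn t ht =>
    rw [← mul_assoc, ← (Subalgebra.isIdempotentElem_toSubmodule T).eq, ← mul_assoc]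
    exact Submodule.mul_mem_mul (hx n hn) ht
  | add a _ b _ ha hb => rw [mul_add]; exact add_mem ha hb

theorem le_ends_mul_toSubmodule (N : Submodule D K) (T : Subalgebra D K) :
    T ≤ ends D K (N * Subalgebra.toSubmodule T) := fun t ht =>
  mem_ends_mul_toSubmodule fun n hn => by
    rw [mul_comm t n]; exact Submodule.mul_mem_mul hn ht

theorem ends_le_ends_mul_toSubmodule (N : Submodule D K) (T : Subalgebra D K) :
    ends D K N ≤ ends D K (N * Subalgebra.toSubmodule T) := fun _ hx =>
  mem_ends_mul_toSubmodule fun n hn => le_mul_toSubmodule N T (hx n hn)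

theorem span_ends_mul_toSubmodule_eq_overEnds (N : Submodule D K) (T : Subalgebra D K) :
    Submodule.span (ends D K (N * Subalgebra.toSubmodule T)) (N : Set K) =
      overEnds D K (N * Subalgebra.toSubmodule T) := by
  refine le_antisymm (Submodule.span_mono (le_mul_toSubmodule N T)) (Submodule.span_le.mpr ?_)
  intro y hy
  induction hy using Submodule.mul_induction_on' with
  | mem_mul_mem n hn t ht =>
    rw [mul_comm n t]
    exact Submodule.smul_mem _ (⟨t, le_ends_mul_toSubmodule N T ht⟩ : ends D K _)
      (Submodule.subset_span hn)
  | add a _ b _ ha hb => exact add_mem ha hb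

end Ends

theorem quasiStable_extension_to_overring_general
    (D K : Type*) [CommRing D] [Field K] [Algebra D K] [IsFractionRing D K]
    (I : FractionalIdeal D⁰ K)
    (T : Subalgebra D K)
    (hqs : IsQuasiStable D K (I : Submodule D K)) :
    IsQuasiStable D K ((I : Submodule D K) * Subalgebra.toSubmodule T) := by
  set N : Submodule D K := ↑I
  let _ := (Subalgebra.inclusion (ends_le_ends_mul_toSubmodule N T)).toAlgebra
  have : IsScalarTower (ends D K N) (ends D K (N * Subalgebra.toSubmodule T)) K :=
    .of_algebraMap_smul fun _ _ => rfl
  have : Module.Flat (ends D K N) (overEnds D K N) := hqs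
  have := Module.Flat.span_of_isLocalization (ends D K N)⁰
    (B := ends D K (N * Subalgebra.toSubmodule T)) Subtype.val_injective (overEnds D K N)
  rwa [coe_overEnds, span_ends_mul_toSubmodule_eq_overEnds] at this

/-- If `I` is a quasi-stable nonzero fractional ideal of `D` and `T` an overring of `D`,
then `IT` is a quasi-stable ideal of `T` (flat over its endomorphism ring `(IT : IT)`). -/
theorem quasiStable_extension_to_overring
    (D K : Type*) [CommRing D] [IsDomain D] [Field K] [Algebra D K] [IsFractionRing D K]
    (I : FractionalIdeal D⁰ K) (hI : I ≠ 0)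
    (T : Subalgebra D K)
    (hqs : IsQuasiStable D K (I : Submodule D K)) :
    IsQuasiStable D K ((I : Submodule D K) * Subalgebra.toSubmodule T) :=
  quasiStable_extension_to_overring_general D K I T hqs
end

section
/- Let D be an integrally closed domain. Then D is quasi-stable if and only if D is finitely stable, if and only if D is a Prüfer domain. -/
open scoped nonZeroDivisors

/-! For a nonzero finitely generated ideal `I` of an integrally closed domain `D`, every element
of `(I : I)` is integral over `D`, so `(I : I) = D` and finite stability is just invertibility of
finitely generated ideals.

A flat fractional ideal `N` generated by `x₁, …, xₙ`, one of which, `x₀`, is nonzero, is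
invertible: flatness trivialises all the relations `xᵢ x₀ = x₀ xᵢ` at once, writing
`x₀ = ∑ bⱼ yⱼ` with `yⱼ ∈ N` and `bⱼ / x₀ ∈ N⁻¹`, whence `1 ∈ N N⁻¹`.

Conversely, an overring `E` of a Prüfer domain, such as `(I : I)`, is Prüfer, since extension of
fractional ideals to `E` is multiplicative. Over a Prüfer domain every submodule `N` of a vector
space over the fraction field is flat: an element of `J ⊗ N` mapping to `0` in `N` is killed by
every product `a b` with `a ∈ J`, `b ∈ J⁻¹`, and these generate `J J⁻¹ = 1`. -/

namespace Submodule

variable {R S A : Type*} [CommSemiring R] [CommSemiring S] [CommSemiring A] [Algebra R S]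
  [Algebra S A] [Algebra R A] [IsScalarTower R S A]

theorem restrictScalars_div (I J : Submodule S A) :
    (I / J).restrictScalars R = I.restrictScalars R / J.restrictScalars R :=
  rfl

theorem restrictScalars_one_of_surjective (hsur : Function.Surjective (algebraMap R S)) :
    (1 : Submodule S A).restrictScalars R = 1 := by
  rw [one_eq_span, one_eq_span, restrictScalars_span R S hsur]

theorem span_mul_one_div_span_eq_one_iff (hsur : Function.Surjective (algebraMap R S))
    (M : Submodule R A) :
    span S (M : Set A) * (1 / span S (M : Set A)) = 1 ↔ M * (1 / M) = 1 := by
  rw [← (restrictScalars_injective R S A).eq_iff, restrictScalars_mul, restrictScalars_div,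
    restrictScalars_one_of_surjective hsur, restrictScalars_span R S hsur, span_eq]

end Submodule

theorem Module.Flat.exists_factorization_of_proportional {R M ι : Type*} [CommRing R]
    [AddCommGroup M] [Module R M] [Module.Flat R M] [Fintype ι]
    {x : ι → M} {c : ι → R} (i₀ : ι) (hxc : ∀ i, c i • x i₀ = c i₀ • x i) :
    ∃ (k : ℕ) (B : ι → Fin k → R) (Y : Fin k → M),
      (∀ i, x i = ∑ j, B i j • Y j) ∧ ∀ i j, c i * B i₀ j = c i₀ * B i j := by
  let ψ : (ι →₀ R) →ₗ[R] M := Finsupp.linearCombination R x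
  let κ : (ι →₀ R) →ₗ[R] (ι →₀ R) :=
    Finsupp.linearCombination R fun i => Finsupp.single i₀ (c i) - Finsupp.single i (c i₀)
  have hψκ : ψ ∘ₗ κ = 0 := Finsupp.lhom_ext fun i r => by simp [ψ, κ, hxc]
  obtain ⟨k, a, y, hya, haκ⟩ := exists_factorization_of_comp_eq_zero_of_free hψκ
  refine ⟨k, fun i j => a (Finsupp.single i 1) j, fun j => y (Finsupp.single j 1), fun i => ?_,
    fun i j => ?_⟩
  · have hy : y = Finsupp.linearCombination R fun j => y (Finsupp.single j 1) :=
      Finsupp.lhom_ext fun j r => by simp [← map_smul]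
    have hψ : ψ (Finsupp.single i 1) = x i := by simp [ψ]
    rw [← hψ, hya, LinearMap.comp_apply]
    conv_lhs => rw [hy]
    rw [Finsupp.linearCombination_apply, Finsupp.sum_fintype _ _ (by simp)]
  · have hrel := congr($haκ (Finsupp.single i 1) j)
    rw [LinearMap.comp_apply, Finsupp.linearCombination_single, one_smul, map_sub,
      ← Finsupp.smul_single_one i₀, ← Finsupp.smul_single_one i, map_smul, map_smul] at hrel
    simpa [sub_eq_zero] using hrel

namespace Submodule

variable {R K : Type*} [CommRing R] [Field K] [Algebra R K] [IsDomain R] [IsFractionRing R K]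

theorem mul_one_div_eq_one_of_flat {N : Submodule R K} (hfg : N.FG) (hN : N ≠ ⊥)
    [Module.Flat R N] : N * (1 / N) = 1 := by
  obtain ⟨n, g, hg⟩ := fg_iff_exists_fin_generating_family.mp hfg
  obtain ⟨i₀, hi₀⟩ : ∃ i₀, g i₀ ≠ 0 := by
    by_contra! h
    exact hN (hg ▸ span_eq_bot.mpr (by rintro _ ⟨i, rfl⟩; exact h i))
  obtain ⟨d, hd⟩ := IsLocalization.exist_integer_multiples_of_finite R⁰ g
  choose c hc using hd
  have hgN : ∀ i, g i ∈ N := fun i => hg ▸ subset_span ⟨i, rfl⟩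
  -- `c i = d • g i` clears denominators, so `g i₀ : g i = c i₀ : c i` is a relation over `R`
  obtain ⟨k, B, Y, hgY, hB⟩ :=
    Module.Flat.exists_factorization_of_proportional (x := fun i => (⟨g i, hgN i⟩ : N)) (c := c)
      i₀ fun i => Subtype.ext (by simp [Algebra.smul_def, hc]; ring)
  have hBK : ∀ i j, g i * algebraMap R K (B i₀ j) = g i₀ * algebraMap R K (B i j) := by
    intro i j
    have hBK := congr(algebraMap R K $(hB i j))
    simp only [map_mul, hc, Algebra.smul_def, mul_assoc] at hBK
    exact mul_left_cancel₀ (IsFractionRing.to_map_ne_zero_of_mem_nonZeroDivisors d.2) hBK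
  have hdiv : ∀ j, algebraMap R K (B i₀ j) / g i₀ ∈ 1 / N := by
    intro j
    have hle :
        N ≤ (1 : Submodule R K).comap (LinearMap.mulLeft R (algebraMap R K (B i₀ j) / g i₀)) := by
      rw [← hg, span_le, Set.range_subset_iff]
      intro i
      rw [SetLike.mem_coe, mem_comap, LinearMap.mulLeft_apply, div_mul_eq_mul_div, mul_comm, hBK,
        mul_div_cancel_left₀ _ hi₀]
      exact mem_one.mpr ⟨_, rfl⟩
    exact fun z hz => hle hz
  have hone : (1 : K) = ∑ j, (Y j : K) * (algebraMap R K (B i₀ j) / g i₀) := by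
    have hgK : g i₀ = ∑ j, algebraMap R K (B i₀ j) * Y j := by
      simpa [Algebra.smul_def] using congr(($(hgY i₀) : K))
    rw [← div_self hi₀, hgK, Finset.sum_div]
    exact Finset.sum_congr rfl fun j _ => by ring
  refine le_antisymm mul_one_div_le_one (one_le.mpr ?_)
  rw [hone]
  exact sum_mem fun j _ => mul_mem_mul (Y j).2 (hdiv j)

end Submodule

def IsPrufer (R K : Type*) [CommRing R] [IsDomain R] [Field K] [Algebra R K]
    [IsFractionRing R K] : Prop :=
  ∀ I : Ideal R, I ≠ ⊥ → I.FG → (I : FractionalIdeal R⁰ K) * (I : FractionalIdeal R⁰ K)⁻¹ = 1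

namespace IsPrufer

variable {R K : Type*} [CommRing R] [IsDomain R] [Field K] [Algebra R K] [IsFractionRing R K]

open FractionalIdeal in
theorem isUnit_of_fg (hR : IsPrufer R K) {I : FractionalIdeal R⁰ K} (hI : I ≠ 0)
    (hfg : (I : Submodule R K).FG) : IsUnit I := by
  obtain ⟨a, aI, ha, rfl⟩ := I.exists_eq_spanSingleton_mul
  set x := (algebraMap R K a)⁻¹
  have hx : x ≠ 0 := inv_ne_zero (IsFractionRing.to_map_ne_zero_of_mem_nonZeroDivisors
    (mem_nonZeroDivisors_of_ne_zero ha))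
  have hunit : IsUnit (spanSingleton R⁰ x) := .of_mul_eq_one (spanSingleton R⁰ x⁻¹) <| by
    rw [spanSingleton_mul_spanSingleton, mul_inv_cancel₀ hx, spanSingleton_one]
  have haI : aI ≠ ⊥ := by
    rintro rfl
    simp at hI
  have haI_eq :
      (aI : FractionalIdeal R⁰ K) = spanSingleton R⁰ x⁻¹ * (spanSingleton R⁰ x * aI) := by
    rw [← mul_assoc, spanSingleton_mul_spanSingleton, inv_mul_cancel₀ hx, spanSingleton_one,
      one_mul]
  have haI_fg : aI.FG := by
    rw [← coeIdeal_fg R⁰ (IsFractionRing.injective R K), haI_eq, coe_mul, coe_spanSingleton]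
    exact (Submodule.fg_span_singleton _).mul hfg
  exact hunit.mul ((mul_inv_cancel_iff_isUnit K).mp (hR aI haI haI_fg))

open FractionalIdeal in
theorem subalgebra (hR : IsPrufer R K) (E : Subalgebra R K) : IsPrufer E K := by
  intro J hJ ⟨s, hs⟩
  have hle : R⁰ ≤ E⁰.comap (algebraMap R E) :=
    nonZeroDivisors_le_comap_nonZeroDivisors_of_injective _
      (FaithfulSMul.algebraMap_injective R E)
  have hmap : IsLocalization.map K (algebraMap R E) hle = RingHom.id K :=
    IsLocalization.ringHom_ext R⁰ <| RingHom.ext fun r => by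
      simp [← IsScalarTower.algebraMap_apply]
  set I : FractionalIdeal R⁰ K := spanFinset R s (fun e => (e : K))
  have hI : I ≠ 0 := by
    rw [spanFinset_ne_zero]
    by_contra! h
    exact hJ (hs ▸ Ideal.span_eq_bot.mpr fun e he => Subtype.ext (h e he))
  have hext : extendedHom' K hle I = (J : FractionalIdeal E⁰ K) := by
    rw [← coeToSubmodule_inj, extendedHom'_apply, coe_extended_eq_span, hmap, RingHom.coe_id,
      Set.image_id, coe_coeIdeal, ← hs, IsLocalization.coeSubmodule_span]
    change Submodule.span E ((I : Submodule R K) : Set K) = _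
    rw [spanFinset_coe, Submodule.span_span_of_tower]
    rfl
  rw [mul_inv_cancel_iff_isUnit, ← hext]
  exact (hR.isUnit_of_fg hI (Submodule.fg_span (s.finite_toSet.image _))).map _

end IsPrufer

section Flat

variable {R K V : Type*} [CommRing R] [Field K] [Algebra R K] [AddCommGroup V] [Module K V]
  [Module R V] [IsScalarTower R K V]

open TensorProduct LinearMap in
theorem smul_eq_zero_of_lift_lsmul_eq_zero (hinj : Function.Injective (algebraMap R K))
    {N : Submodule R V} {J : Ideal R} {x : J ⊗[R] N}
    (hx : lift ((lsmul R N).comp J.subtype) x = 0) {a : R} (ha : a ∈ J) {b : K}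
    (hb : ∀ c ∈ J, ∃ s : R, algebraMap R K s = b * algebraMap R K c) {r : R}
    (hr : algebraMap R K r = b * algebraMap R K a) : r • x = 0 := by
  -- `r = a b` and `b J ⊆ R`, so `r • (c ⊗ m) = a ⊗ ((b c) • m)`
  have hmove : ∀ y : J ⊗[R] N, ∃ n : N,
      (n : V) = b • (lift ((lsmul R N).comp J.subtype) y : V) ∧ r • y = ⟨a, ha⟩ ⊗ₜ n := by
    intro y
    induction y using TensorProduct.induction_on with
    | zero => exact ⟨0, by simp, by simp⟩
    | tmul c m =>
      obtain ⟨s, hs⟩ := hb c c.2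
      refine ⟨s • m, ?_, ?_⟩
      · change s • (m : V) = b • ((c : R) • (m : V))
        rw [← algebraMap_smul K s, ← algebraMap_smul K (c : R), smul_smul, hs]
      · have : r • c = s • (⟨a, ha⟩ : J) := Subtype.ext <| hinj <| by
          simp only [SetLike.val_smul, smul_eq_mul, map_mul, hr, hs]; ring
        rw [TensorProduct.smul_tmul', this, TensorProduct.smul_tmul]
    | add y z hy hz =>
      obtain ⟨n, hn, hyn⟩ := hy
      obtain ⟨n', hn', hzn'⟩ := hz
      exact ⟨n + n', by simp [hn, hn'], by rw [smul_add, hyn, hzn', TensorProduct.tmul_add]⟩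
  obtain ⟨n, hn, hxn⟩ := hmove x
  rw [hx, Submodule.coe_zero, smul_zero, Submodule.coe_eq_zero] at hn
  rw [hxn, hn, TensorProduct.tmul_zero]

open TensorProduct LinearMap FractionalIdeal in
theorem IsPrufer.flat [IsDomain R] [IsFractionRing R K] (hR : IsPrufer R K) (N : Submodule R V) :
    Module.Flat R N := by
  rw [Module.Flat.iff_lift_lsmul_comp_subtype_injective]
  intro J hfg
  rcases eq_or_ne J ⊥ with rfl | hJ
  · exact fun _ _ _ => Subsingleton.elim _ _
  rw [injective_iff_map_eq_zero]
  intro x hx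
  set A : Ideal R := (Submodule.span R {x}).annihilator
  have hJA : (J : FractionalIdeal R⁰ K) * (J : FractionalIdeal R⁰ K)⁻¹ ≤ A := by
    rw [mul_le]
    rintro _ hi j hj
    obtain ⟨a, ha, rfl⟩ := (mem_coeIdeal R⁰).mp hi
    have hb : ∀ c ∈ J, ∃ s : R, algebraMap R K s = j * algebraMap R K c := fun c hc =>
      (mem_one_iff R⁰).mp <|
        (mem_inv_iff (coeIdeal_ne_zero.mpr hJ)).mp hj _ (mem_coeIdeal_of_mem R⁰ hc)
    obtain ⟨r, hr⟩ := hb a ha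
    refine (mem_coeIdeal R⁰).mpr ⟨r, ?_, by rw [hr, mul_comm]⟩
    exact (Submodule.mem_annihilator_span_singleton x r).mpr <|
      smul_eq_zero_of_lift_lsmul_eq_zero (IsFractionRing.injective R K) hx ha hb hr
  rw [hR J hJ hfg, ← coeIdeal_top, coeIdeal_le_coeIdeal, top_le_iff] at hJA
  have hone : (1 : R) ∈ A := hJA ▸ Submodule.mem_top
  rw [← one_smul R x]
  exact (Submodule.mem_annihilator_span_singleton x 1).mp hone

end Flat

section Ends

variable {D K : Type*} [CommRing D] [Field K] [Algebra D K] [IsFractionRing D K]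

theorem overEnds_mul_one_div_eq_one_of_isQuasiStable {M : Submodule D K} (hM : M ≠ ⊥)
    (hfg : M.FG) (hq : IsQuasiStable D K M) : overEnds D K M * (1 / overEnds D K M) = 1 := by
  have : Module.Flat (ends D K M) (overEnds D K M) := hq
  refine Submodule.mul_one_div_eq_one_of_flat ?_ ?_
  · obtain ⟨s, rfl⟩ := hfg
    exact ⟨s, by rw [overEnds, Submodule.span_span_of_tower]⟩
  · rw [Ne, overEnds, Submodule.span_eq_bot]
    exact fun h => hM ((Submodule.eq_bot_iff M).mpr h)

theorem IsPrufer.isQuasiStable [IsDomain D] (hD : IsPrufer D K) (M : Submodule D K) :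
    IsQuasiStable D K M :=
  (hD.subalgebra (ends D K M)).flat _

theorem surjective_algebraMap_ends [IsIntegrallyClosed D] {M : Submodule D K} (hM : M ≠ ⊥)
    (hfg : M.FG) : Function.Surjective (algebraMap D (ends D K M)) := by
  intro e
  have hint : IsIntegral D (e : K) := isIntegral_of_smul_mem_submodule M hM hfg _ e.2
  obtain ⟨d, hd⟩ := IsIntegrallyClosed.isIntegral_iff.mp hint
  exact ⟨d, Subtype.ext hd⟩

theorem overEnds_mul_one_div_eq_one_iff [IsIntegrallyClosed D] {M : Submodule D K} (hM : M ≠ ⊥)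
    (hfg : M.FG) : overEnds D K M * (1 / overEnds D K M) = 1 ↔ M * (1 / M) = 1 :=
  Submodule.span_mul_one_div_span_eq_one_iff (surjective_algebraMap_ends hM hfg) M

end Ends

theorem FractionalIdeal.mul_inv_eq_one_iff_coe_mul_one_div {R K : Type*} [CommRing R] [IsDomain R]
    [Field K] [Algebra R K] [IsFractionRing R K] {I : FractionalIdeal R⁰ K} (hI : I ≠ 0) :
    I * I⁻¹ = 1 ↔ (I : Submodule R K) * (1 / (I : Submodule R K)) = 1 := by
  rw [← coeToSubmodule_inj, coe_mul, inv_eq, coe_div hI, coe_one]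

/-- For an integrally closed domain `D`, the following are equivalent: `D` is quasi-stable;
`D` is finitely stable; `D` is a Prüfer domain. -/
theorem integrallyClosed_quasiStable_iff_finitelyStable_iff_prufer
    (D K : Type*) [CommRing D] [IsDomain D] [Field K] [Algebra D K] [IsFractionRing D K]
    [IsIntegrallyClosed D] :
    ((∀ I : FractionalIdeal D⁰ K, I ≠ 0 → IsQuasiStable D K (I : Submodule D K)) ↔
      (∀ I : Ideal D, I ≠ ⊥ → I.FG →
        overEnds D K ((I : FractionalIdeal D⁰ K) : Submodule D K) *
          ((1 : Submodule (ends D K ((I : FractionalIdeal D⁰ K) : Submodule D K)) K) /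
            overEnds D K ((I : FractionalIdeal D⁰ K) : Submodule D K)) = 1)) ∧
    ((∀ I : Ideal D, I ≠ ⊥ → I.FG →
        overEnds D K ((I : FractionalIdeal D⁰ K) : Submodule D K) *
          ((1 : Submodule (ends D K ((I : FractionalIdeal D⁰ K) : Submodule D K)) K) /
            overEnds D K ((I : FractionalIdeal D⁰ K) : Submodule D K)) = 1) ↔
      (∀ I : Ideal D, I ≠ ⊥ → I.FG →
        (I : FractionalIdeal D⁰ K) * (I : FractionalIdeal D⁰ K)⁻¹ = 1)) := by
  have hne : ∀ {I : Ideal D}, I ≠ ⊥ → ((I : FractionalIdeal D⁰ K) : Submodule D K) ≠ ⊥ :=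
    fun hI => by rwa [Ne, FractionalIdeal.coeToSubmodule_eq_bot, FractionalIdeal.coeIdeal_eq_zero]
  have hfg : ∀ {I : Ideal D}, I.FG → ((I : FractionalIdeal D⁰ K) : Submodule D K).FG :=
    fun hI => (FractionalIdeal.coeIdeal_fg D⁰ (IsFractionRing.injective D K) _).mpr hI
  have hBC := fun (I : Ideal D) (hI : I ≠ ⊥) (hI' : I.FG) =>
    (overEnds_mul_one_div_eq_one_iff (hne hI) (hfg hI')).trans <|
      (FractionalIdeal.mul_inv_eq_one_iff_coe_mul_one_div
        (FractionalIdeal.coeIdeal_ne_zero.mpr hI)).symm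
  refine ⟨⟨fun hA I hI hI' => ?_, fun hB I _ => ?_⟩, forall₃_congr hBC⟩
  · exact overEnds_mul_one_div_eq_one_of_isQuasiStable (hne hI) (hfg hI')
      (hA _ (FractionalIdeal.coeIdeal_ne_zero.mpr hI))
  · exact IsPrufer.isQuasiStable (fun J hJ hJ' => (hBC J hJ hJ').mp (hB J hJ hJ')) _
end
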